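/- arXiv:2510.07523 — 6 statements merged into one kernel-verified Lean document; each statement's English description precedes it below -/
import Mathlib

section
/- Let μ₀, μ₁ ∈ P_p(ℝ^d) (p ≥ 1) and π ∈ Γ(μ₀,μ₁) a coupling. Assume μ₀ has finite support S = {x̄₁,…,x̄_N} with minimal gap δ := min{|x̄_i − x̄_j| : i ≠ j}, and sup{|y − x| : (x,y) ∈ supp π} ≤ δ/2. Then π is W_p-optimal, i.e., W_p^p(μ₀,μ₁) = ∫ |y − x|^p dπ(x,y). -/
open MeasureTheory Set ENNReal

set_option maxHeartbeats 1000000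

/-- The set of couplings (transport plans) between two measures. -/
def couplings {α : Type*} [MeasurableSpace α] (μ ν : Measure α) : Set (Measure (α × α)) :=
  {π | π.map Prod.fst = μ ∧ π.map Prod.snd = ν}

/-- The `p`-th power of the `p`-Wasserstein distance: the infimum over couplings of the
integral of the `p`-th power of the distance. -/
noncomputable def Wpp {α : Type*} [MeasurableSpace α] [PseudoEMetricSpace α]
    (p : ℝ) (μ ν : Measure α) : ℝ≥0∞ :=
  ⨅ π ∈ couplings μ ν, ∫⁻ z : α × α, edist z.1 z.2 ^ p ∂π

/-- Let `μ₀, μ₁ ∈ P_p(ℝ^d)` with `μ₀` finitely supported with minimal gap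
`≥ δ > 0`, and let `π` be a coupling whose displacements are (a.e., equivalently on the
support) at most `δ/2`.  Then `π` is `W_p`-optimal:
`W_p^p(μ₀,μ₁) = ∫ |y−x|^p dπ(x,y)`. -/
theorem finite_support_small_displacement_optimal
    {d : ℕ} (p : ℝ) (hp : 1 ≤ p)
    (μ₀ μ₁ : Measure (EuclideanSpace ℝ (Fin d)))
    [IsProbabilityMeasure μ₀] [IsProbabilityMeasure μ₁]
    (hm₀ : ∫⁻ x, edist x 0 ^ p ∂μ₀ < ⊤) (hm₁ : ∫⁻ x, edist x 0 ^ p ∂μ₁ < ⊤)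
    (S : Finset (EuclideanSpace ℝ (Fin d))) (hS : μ₀ (↑S)ᶜ = 0)
    (δ : ℝ) (hδ : 0 < δ)
    (hgap : ∀ x ∈ S, ∀ y ∈ S, x ≠ y → δ ≤ dist x y)
    (π : Measure (EuclideanSpace ℝ (Fin d) × EuclideanSpace ℝ (Fin d)))
    (hπ : π ∈ couplings μ₀ μ₁)
    (hsmall : ∀ᵐ z ∂π, dist z.1 z.2 ≤ δ / 2) :
    Wpp p μ₀ μ₁ = ∫⁻ z, edist z.1 z.2 ^ p ∂π := by
  have hp0 : (0:ℝ) ≤ p := le_trans zero_le_one hp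
  -- Kantorovich potential ψ(y) = min over x̄ ∈ S of edist(x̄,y)^p
  set ψ : EuclideanSpace ℝ (Fin d) → ℝ≥0∞ := fun y => ⨅ x : S, edist (x : EuclideanSpace ℝ (Fin d)) y ^ p with hψdef
  have hψmeas : Measurable ψ := by
    apply Measurable.iInf
    intro x
    exact ((continuous_const.edist continuous_id).measurable).pow_const _
  have hSmeas : MeasurableSet ((S : Set (EuclideanSpace ℝ (Fin d))))ᶜ := (S.finite_toSet.measurableSet).compl
  -- a.e. first coordinate lies in S, for any coupling π'
  have hfst : ∀ π' ∈ couplings μ₀ μ₁, ∀ᵐ z ∂π', z.1 ∈ (S : Set (EuclideanSpace ℝ (Fin d))) := by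
    intro π' hπ'
    have : π' (Prod.fst ⁻¹' ((S : Set (EuclideanSpace ℝ (Fin d))))ᶜ) = 0 := by
      rw [← Measure.map_apply measurable_fst hSmeas, hπ'.1, hS]
    filter_upwards [measure_eq_zero_iff_ae_notMem.mp this] with z hz
    simpa using hz
  -- lower bound: any coupling's cost is at least ∫ ψ dμ₁
  have key : ∀ π' ∈ couplings μ₀ μ₁,
      ∫⁻ y, ψ y ∂μ₁ ≤ ∫⁻ z : EuclideanSpace ℝ (Fin d) × EuclideanSpace ℝ (Fin d), edist z.1 z.2 ^ p ∂π' := by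
    intro π' hπ'
    have h1 : ∫⁻ y, ψ y ∂μ₁ = ∫⁻ z : EuclideanSpace ℝ (Fin d) × EuclideanSpace ℝ (Fin d), ψ z.2 ∂π' := by
      rw [← hπ'.2, lintegral_map hψmeas measurable_snd]
    rw [h1]
    apply lintegral_mono_ae
    filter_upwards [hfst π' hπ'] with z hz
    exact iInf_le (fun x : S => edist (x : EuclideanSpace ℝ (Fin d)) z.2 ^ p) ⟨z.1, Finset.mem_coe.mp hz⟩
  -- equality for π: π-a.e., edist z.1 z.2 ^ p = ψ z.2
  have heq : ∫⁻ z : EuclideanSpace ℝ (Fin d) × EuclideanSpace ℝ (Fin d), edist z.1 z.2 ^ p ∂π = ∫⁻ y, ψ y ∂μ₁ := by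
    have h1 : ∫⁻ y, ψ y ∂μ₁ = ∫⁻ z : EuclideanSpace ℝ (Fin d) × EuclideanSpace ℝ (Fin d), ψ z.2 ∂π := by
      rw [← hπ.2, lintegral_map hψmeas measurable_snd]
    rw [h1]
    apply lintegral_congr_ae
    filter_upwards [hfst π hπ, hsmall] with z hz hd
    have hz' : z.1 ∈ S := Finset.mem_coe.mp hz
    refine le_antisymm ?_ (iInf_le (fun x : S => edist (x : EuclideanSpace ℝ (Fin d)) z.2 ^ p) ⟨z.1, hz'⟩)
    apply le_iInf
    rintro ⟨x, hx⟩
    apply ENNReal.rpow_le_rpow _ hp0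
    rw [edist_dist, edist_dist]
    apply ENNReal.ofReal_le_ofReal
    by_cases hxz : x = z.1
    · simp [hxz]
    · have h2 : δ ≤ dist x z.1 := hgap x hx z.1 hz hxz
      have := dist_triangle x z.1 z.2
      have h3 : dist x z.1 ≤ dist x z.2 + dist z.1 z.2 := by
        have := dist_triangle x z.2 z.1
        simpa [dist_comm] using this
      linarith
  -- conclude
  have hle : Wpp p μ₀ μ₁ ≤ ∫⁻ z, edist z.1 z.2 ^ p ∂π := biInf_le _ hπ
  refine le_antisymm hle ?_
  rw [heq, Wpp]
  exact le_iInf₂ key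
end

section
/- Let μ₀, μ₁ ∈ P_p(ℝ^d) (p > 1) have finite support, π ∈ Γ(μ₀,μ₁), and define μ_t := (x^t)_♯π with x^t(x₀,x₁) = (1−t)x₀ + t x₁. Then for every s ∈ [0,1] there exists δ > 0 such that for all t ∈ [0,1] with |t−s| ≤ δ, the plan (x^s, x^t)_♯π is W_p-optimal between μ_s and μ_t, and W_p^p(μ_s,μ_t) = |t−s|^p ∫|x₀−x₁|^p dπ. -/
open MeasureTheory Set ENNReal

/-- Linear interpolation map `x^t(x₀,x₁) = (1−t)x₀ + t x₁`. -/
noncomputable def interp {d : ℕ} (t : ℝ)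
    (z : EuclideanSpace ℝ (Fin d) × EuclideanSpace ℝ (Fin d)) : EuclideanSpace ℝ (Fin d) :=
  (1 - t) • z.1 + t • z.2

/-- Let `μ₀, μ₁ ∈ P_p(ℝ^d)` (`p > 1`) be finitely supported,
`π ∈ Γ(μ₀,μ₁)`, and `μ_t := (x^t)_♯π`.  Then for every `s ∈ [0,1]` there is a `δ > 0` such
that for all `t ∈ [0,1]` with `|t−s| ≤ δ` the plan `(x^s,x^t)_♯π` is a `W_p`-optimal coupling
of `μ_s` and `μ_t`, and `W_p^p(μ_s,μ_t) = |t−s|^p ∫ |x₀−x₁|^p dπ`. -/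
theorem displacement_interpolation_locally_geodesic
    {d : ℕ} (p : ℝ) (hp : 1 < p)
    (μ₀ μ₁ : Measure (EuclideanSpace ℝ (Fin d)))
    [IsProbabilityMeasure μ₀] [IsProbabilityMeasure μ₁]
    (S₀ S₁ : Finset (EuclideanSpace ℝ (Fin d)))
    (hS₀ : μ₀ (↑S₀)ᶜ = 0) (hS₁ : μ₁ (↑S₁)ᶜ = 0)
    (π : Measure (EuclideanSpace ℝ (Fin d) × EuclideanSpace ℝ (Fin d)))
    (hπ : π ∈ couplings μ₀ μ₁) :
    ∀ s ∈ Icc (0:ℝ) 1, ∃ δ > (0:ℝ), ∀ t ∈ Icc (0:ℝ) 1, |t - s| ≤ δ →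
      (π.map (fun z => (interp s z, interp t z)) ∈
          couplings (π.map (interp s)) (π.map (interp t))) ∧
      (∫⁻ z, edist z.1 z.2 ^ p ∂(π.map (fun z => (interp s z, interp t z))) =
          Wpp p (π.map (interp s)) (π.map (interp t))) ∧
      Wpp p (π.map (interp s)) (π.map (interp t)) =
        ENNReal.ofReal (|t - s| ^ p) * ∫⁻ z, edist z.1 z.2 ^ p ∂π := by
  classical
  intro s hs
  have hp0 : (0:ℝ) ≤ p := le_of_lt (lt_trans zero_lt_one hp)
  -- measurability of the interpolation maps and of the cost
  have hmi : ∀ u : ℝ, Measurable (interp (d := d) u) := by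
    intro u
    have : Continuous (interp (d := d) u) := by
      unfold interp
      exact ((continuous_fst : Continuous (Prod.fst : EuclideanSpace ℝ (Fin d) × EuclideanSpace ℝ (Fin d) → _)).const_smul (1 - u)).add
        ((continuous_snd : Continuous (Prod.snd : EuclideanSpace ℝ (Fin d) × EuclideanSpace ℝ (Fin d) → _)).const_smul u)
    exact this.measurable
  have hc : Measurable
      (fun z : EuclideanSpace ℝ (Fin d) × EuclideanSpace ℝ (Fin d) => edist z.1 z.2 ^ p) :=
    ENNReal.continuous_rpow_const.measurable.comp measurable_edist
  -- distance formula for the interpolation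
  have hdist : ∀ (u v : ℝ) (z : EuclideanSpace ℝ (Fin d) × EuclideanSpace ℝ (Fin d)),
      dist (interp u z) (interp v z) = |v - u| * dist z.1 z.2 := by
    intro u v z
    have h : interp u z - interp v z = (v - u) • (z.1 - z.2) := by
      simp only [interp]; module
    rw [dist_eq_norm, h, norm_smul, Real.norm_eq_abs, ← dist_eq_norm]
  -- π is concentrated on S₀ ×ˢ S₁
  have hπT : π ((↑(S₀ ×ˢ S₁) : Set _)ᶜ) = 0 := by
    have h0 : π (Prod.fst ⁻¹' (↑S₀ : Set _)ᶜ) = 0 := by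
      rw [← Measure.map_apply measurable_fst S₀.measurableSet.compl, hπ.1]; exact hS₀
    have h1 : π (Prod.snd ⁻¹' (↑S₁ : Set _)ᶜ) = 0 := by
      rw [← Measure.map_apply measurable_snd S₁.measurableSet.compl, hπ.2]; exact hS₁
    refine measure_mono_null ?_ (measure_union_null h0 h1)
    intro z hz
    simp only [mem_compl_iff, Finset.coe_product, mem_prod, Finset.mem_coe, not_and_or] at hz
    simpa only [mem_union, mem_preimage, mem_compl_iff, Finset.mem_coe] using hz
  have hTae : ∀ᵐ z ∂π, z ∈ (S₀ ×ˢ S₁ : Finset _) := by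
    rw [ae_iff]
    exact hπT
  -- finite supports of μ_s and minimal gap G
  set A : Finset (EuclideanSpace ℝ (Fin d)) := (S₀ ×ˢ S₁).image (interp s) with hA
  obtain ⟨G, hG0, hG⟩ : ∃ G > (0:ℝ), ∀ a ∈ A, ∀ b ∈ A, a ≠ b → G ≤ dist a b := by
    by_cases hD : ((A ×ˢ A).filter fun q => q.1 ≠ q.2).Nonempty
    · obtain ⟨q, hq, hqmin⟩ := Finset.exists_min_image _ (fun q => dist q.1 q.2) hD
      rw [Finset.mem_filter] at hq
      refine ⟨dist q.1 q.2, dist_pos.mpr hq.2, fun a ha b hb hab => ?_⟩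
      exact hqmin (a, b) (by simp [Finset.mem_filter, Finset.mem_product, ha, hb, hab])
    · refine ⟨1, one_pos, fun a ha b hb hab => absurd ⟨(a, b), ?_⟩ hD⟩
      simp [Finset.mem_filter, Finset.mem_product, ha, hb, hab]
  -- maximal displacement length M
  obtain ⟨M, hM0, hM⟩ : ∃ M ≥ (0:ℝ), ∀ z ∈ (S₀ ×ˢ S₁ : Finset _), dist z.1 z.2 ≤ M := by
    by_cases hne : (S₀ ×ˢ S₁ : Finset _).Nonempty
    · obtain ⟨q, hq, hqmax⟩ := Finset.exists_max_image _ (fun z => dist z.1 z.2) hne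
      exact ⟨dist q.1 q.2, dist_nonneg, fun z hz => hqmax z hz⟩
    · exact ⟨0, le_refl _, fun z hz => absurd ⟨z, hz⟩ hne⟩
  set δ : ℝ := G / (3 * (M + 1)) with hδ
  have hδ0 : 0 < δ := div_pos hG0 (by linarith)
  have hδM : δ * (M + 1) = G / 3 := by
    rw [hδ]; field_simp
  -- the nearest point projection r
  obtain ⟨r, hR⟩ : ∃ r : EuclideanSpace ℝ (Fin d) → EuclideanSpace ℝ (Fin d),
      ∀ y, (∃ x, x ∈ A ∧ dist x y ≤ G / 3) → r y ∈ A ∧ dist (r y) y ≤ G / 3 := by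
    refine ⟨fun y => if h : ∃ x, x ∈ A ∧ dist x y ≤ G / 3 then h.choose else y, fun y h => ?_⟩
    simp only [dif_pos h]
    exact h.choose_spec
  have hrx : ∀ x ∈ A, ∀ y, dist x y ≤ G / 3 → r y = x := by
    intro x hx y hxy
    obtain ⟨h1, h2⟩ := hR y ⟨x, hx, hxy⟩
    by_contra hne
    have := hG _ h1 _ hx hne
    have htri := dist_triangle (r y) y x
    rw [dist_comm y x] at htri
    linarith
  have hrle : ∀ x ∈ A, ∀ y, (∃ x', x' ∈ A ∧ dist x' y ≤ G / 3) →
      dist (r y) y ≤ dist x y := by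
    intro x hx y hy
    obtain ⟨h1, h2⟩ := hR y hy
    by_cases hxy : r y = x
    · rw [hxy]
    · have hGd := hG x hx (r y) h1 (Ne.symm hxy)
      have htri := dist_triangle x y (r y)
      rw [dist_comm y (r y)] at htri
      linarith
  refine ⟨δ, hδ0, ?_⟩
  intro t ht htδ
  -- basic estimate: displacement of length at most G/3
  have hkey : ∀ z ∈ (S₀ ×ˢ S₁ : Finset _), dist (interp s z) (interp t z) ≤ G / 3 := by
    intro z hz
    rw [hdist s t z]
    calc |t - s| * dist z.1 z.2 ≤ δ * (M + 1) :=
          mul_le_mul htδ (le_trans (hM z hz) (by linarith)) dist_nonneg hδ0.le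
      _ = G / 3 := hδM
  -- the plan γ
  have hf : Measurable (fun z => (interp s z, interp t z) :
      EuclideanSpace ℝ (Fin d) × EuclideanSpace ℝ (Fin d) → _) := (hmi s).prodMk (hmi t)
  have hγ : π.map (fun z => (interp s z, interp t z)) ∈
      couplings (π.map (interp s)) (π.map (interp t)) := by
    constructor
    · rw [Measure.map_map measurable_fst hf]; rfl
    · rw [Measure.map_map measurable_snd hf]; rfl
  -- cost of γ
  have hcostγ : ∫⁻ z, edist z.1 z.2 ^ p ∂(π.map (fun z => (interp s z, interp t z))) =
      ∫⁻ z, edist (interp s z) (interp t z) ^ p ∂π := lintegral_map hc hf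
  -- pointwise cost identity
  have hed : ∀ z : EuclideanSpace ℝ (Fin d) × EuclideanSpace ℝ (Fin d),
      edist (interp s z) (interp t z) ^ p =
        ENNReal.ofReal (|t - s| ^ p) * edist z.1 z.2 ^ p := by
    intro z
    rw [edist_dist, hdist s t z, ENNReal.ofReal_mul (abs_nonneg _),
      ENNReal.mul_rpow_of_nonneg _ _ hp0, ← ENNReal.ofReal_rpow_of_nonneg (abs_nonneg _) hp0,
      ← edist_dist]
  have hcost2 : ∫⁻ z, edist (interp s z) (interp t z) ^ p ∂π =
      ENNReal.ofReal (|t - s| ^ p) * ∫⁻ z, edist z.1 z.2 ^ p ∂π := by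
    rw [← lintegral_const_mul _ hc]
    exact lintegral_congr hed
  -- support of μ_t
  set B : Finset (EuclideanSpace ℝ (Fin d)) := (S₀ ×ˢ S₁).image (interp t) with hB
  -- the comparison function g
  set g : EuclideanSpace ℝ (Fin d) → ℝ≥0∞ :=
    fun y => ∑ b ∈ B, Set.indicator {b} (fun _ => edist (r b) b ^ p) y with hg
  have hg_meas : Measurable g :=
    Finset.measurable_sum _ fun b _ =>
      measurable_const.indicator (measurableSet_singleton b)
  have hg_eval : ∀ y ∈ B, g y = edist (r y) y ^ p := by
    intro y hy
    simp only [hg, Set.indicator_apply, Set.mem_singleton_iff]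
    rw [Finset.sum_ite_eq B y (fun b => edist (r b) b ^ p), if_pos hy]
  -- every point of B has a point of A within G/3
  have hBnear : ∀ y ∈ B, ∃ x, x ∈ A ∧ dist x y ≤ G / 3 := by
    intro y hy
    obtain ⟨w, hw, hwy⟩ := Finset.mem_image.mp hy
    exact ⟨interp s w, Finset.mem_image_of_mem _ hw, by rw [← hwy]; exact hkey w hw⟩
  -- g(interp t z) equals the cost of γ pointwise on the support of π
  have hgπ : ∫⁻ z, g (interp t z) ∂π = ∫⁻ z, edist (interp s z) (interp t z) ^ p ∂π := by
    refine lintegral_congr_ae ?_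
    filter_upwards [hTae] with z hz
    have hBt : interp t z ∈ B := Finset.mem_image_of_mem _ hz
    rw [hg_eval _ hBt, hrx (interp s z) (Finset.mem_image_of_mem _ hz) _ (hkey z hz)]
  -- optimality
  have hopt : ∫⁻ z, edist z.1 z.2 ^ p ∂(π.map (fun z => (interp s z, interp t z))) =
      Wpp p (π.map (interp s)) (π.map (interp t)) := by
    refine le_antisymm ?_ ?_
    · simp only [Wpp]
      refine le_iInf₂ fun σ hσ => ?_
      -- a.e. the first coordinate lies in A
      have haeσ1 : ∀ᵐ z ∂σ, z.1 ∈ A := by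
        have h0 : σ (Prod.fst ⁻¹' (↑A : Set _)ᶜ) = 0 := by
          rw [← Measure.map_apply measurable_fst A.measurableSet.compl, hσ.1,
            Measure.map_apply (hmi s) A.measurableSet.compl]
          refine measure_mono_null ?_ hπT
          intro z hz hzT
          exact hz (Finset.mem_image_of_mem _ (by simpa using hzT))
        rw [ae_iff]
        exact h0
      have haeσ2 : ∀ᵐ z ∂σ, z.2 ∈ B := by
        have h0 : σ (Prod.snd ⁻¹' (↑B : Set _)ᶜ) = 0 := by
          rw [← Measure.map_apply measurable_snd B.measurableSet.compl, hσ.2,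
            Measure.map_apply (hmi t) B.measurableSet.compl]
          refine measure_mono_null ?_ hπT
          intro z hz hzT
          exact hz (Finset.mem_image_of_mem _ (by simpa using hzT))
        rw [ae_iff]
        exact h0
      have hptwise : ∀ᵐ z ∂σ, g z.2 ≤ edist z.1 z.2 ^ p := by
        filter_upwards [haeσ1, haeσ2] with z h1 h2
        rw [hg_eval _ h2]
        refine ENNReal.rpow_le_rpow ?_ hp0
        rw [edist_dist, edist_dist]
        exact ENNReal.ofReal_le_ofReal (hrle z.1 h1 z.2 (hBnear _ h2))
      calc ∫⁻ z, edist z.1 z.2 ^ p ∂(π.map (fun z => (interp s z, interp t z)))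
          = ∫⁻ z, edist (interp s z) (interp t z) ^ p ∂π := hcostγ
        _ = ∫⁻ z, g (interp t z) ∂π := hgπ.symm
        _ = ∫⁻ y, g y ∂(π.map (interp t)) := (lintegral_map hg_meas (hmi t)).symm
        _ = ∫⁻ y, g y ∂(σ.map Prod.snd) := by rw [hσ.2]
        _ = ∫⁻ z, g z.2 ∂σ := lintegral_map hg_meas measurable_snd
        _ ≤ ∫⁻ z, edist z.1 z.2 ^ p ∂σ := lintegral_mono_ae hptwise
    · simp only [Wpp]
      exact iInf₂_le _ hγ
  exact ⟨hγ, hopt, by rw [← hopt, hcostγ, hcost2]⟩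
end

section
/- Let R, S be Polish spaces, e : S → R Borel, f : S → ℝ^d Borel, and λ ∈ M₊(S) with f ∈ L¹(λ; ℝ^d). Define the functional H(ν|μ) := ∫ √(1+|dν/dμ|²) dμ + |ν^⊥|(total variation of the singular part). If H(e_♯(fλ) | e_♯λ) = H(fλ | λ), then, denoting by v : R → ℝ^d a density of e_♯(fλ) with respect to e_♯λ, one has f = v ∘ e λ-almost everywhere. -/
open MeasureTheory Set ENNReal

section Pointwise
variable {E : Type*} [NormedAddCommGroup E] [InnerProductSpace ℝ E]

lemma sqrt_one_add_sq_pos (z : E) : 0 < Real.sqrt (1 + ‖z‖ ^ 2) := by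
  apply Real.sqrt_pos.2; positivity

lemma key_ineq (z w : E) :
    1 + inner ℝ z w ≤ Real.sqrt (1 + ‖z‖ ^ 2) * Real.sqrt (1 + ‖w‖ ^ 2) := by
  have h := real_inner_le_norm ((WithLp.equiv 2 (ℝ × E)).symm (1, z))
    ((WithLp.equiv 2 (ℝ × E)).symm (1, w))
  simpa [WithLp.prod_inner_apply, WithLp.prod_norm_eq_of_L2, add_comm] using h

lemma key_ineq_strict (z w : E) (hzw : z ≠ w) :
    1 + inner ℝ z w < Real.sqrt (1 + ‖z‖ ^ 2) * Real.sqrt (1 + ‖w‖ ^ 2) := by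
  set x := (WithLp.equiv 2 (ℝ × E)).symm (1, z) with hx
  set y := (WithLp.equiv 2 (ℝ × E)).symm (1, w) with hy
  have h : (inner ℝ x y : ℝ) < ‖x‖ * ‖y‖ := by
    rw [inner_lt_norm_mul_iff_real]
    intro hc
    have h1 : ‖y‖ * (1:ℝ) = ‖x‖ * 1 := congrArg (fun p : WithLp 2 (ℝ × E) => p.ofLp.1) hc
    have h2 : ‖y‖ • z = ‖x‖ • w := congrArg (fun p : WithLp 2 (ℝ × E) => p.ofLp.2) hc
    have hxy : ‖x‖ = ‖y‖ := by simpa using h1.symm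
    have hxpos : 0 < ‖x‖ := by
      have h2x : ‖x‖ = Real.sqrt (1 + ‖z‖ ^ 2) := by simp [hx, WithLp.prod_norm_eq_of_L2]
      rw [h2x]; exact sqrt_one_add_sq_pos z
    apply hzw
    have := h2
    rw [← hxy] at this
    exact smul_right_injective E hxpos.ne' this
  have h1 : (inner ℝ x y : ℝ) = 1 + inner ℝ z w := by simp [hx, hy, WithLp.prod_inner_apply]
  have h2 : ‖x‖ = Real.sqrt (1 + ‖z‖ ^ 2) := by simp [hx, WithLp.prod_norm_eq_of_L2]
  have h3 : ‖y‖ = Real.sqrt (1 + ‖w‖ ^ 2) := by simp [hy, WithLp.prod_norm_eq_of_L2]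
  rw [h1, h2, h3] at h; exact h

end Pointwise

section Pairing

lemma abs_coord_le_norm {d : ℕ} (a : EuclideanSpace ℝ (Fin d)) (i : Fin d) : |a i| ≤ ‖a‖ := by
  rw [EuclideanSpace.norm_eq]
  calc |a i| = Real.sqrt (‖a i‖ ^ 2) := by
        rw [Real.sqrt_sq_eq_abs, Real.norm_eq_abs, abs_abs]
    _ ≤ Real.sqrt (∑ j, ‖a j‖ ^ 2) :=
        Real.sqrt_le_sqrt (Finset.single_le_sum (f := fun j => ‖a j‖ ^ 2)
          (fun j _ => by positivity) (Finset.mem_univ i))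

variable {R S : Type*} [mR : MeasurableSpace R] [mS : MeasurableSpace S]
  [TopologicalSpace R] [BorelSpace R]
  {d : ℕ}

lemma pairing_aux
    (e : S → R) (he : Measurable e)
    (f : S → EuclideanSpace ℝ (Fin d)) (hf : Measurable f)
    (lam : Measure S) [IsFiniteMeasure lam] (hfi : Integrable f lam)
    (v : R → EuclideanSpace ℝ (Fin d)) (hv : Measurable v)
    (hvi : Integrable v (lam.map e))
    (hdens : ∀ A : Set R, MeasurableSet A →
      ∫ y in A, v y ∂(lam.map e) = ∫ x in e ⁻¹' A, f x ∂lam)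
    (G : R → EuclideanSpace ℝ (Fin d)) (hG : Measurable G) (hGb : ∀ y, ‖G y‖ ≤ 1) :
    ∫ x, (inner ℝ (f x) (G (e x)) : ℝ) ∂lam = ∫ y, (inner ℝ (v y) (G y) : ℝ) ∂(lam.map e) := by
  classical
  set μR := lam.map e with hμRdef
  haveI hμRfin : IsFiniteMeasure μR :=
    ⟨by rw [hμRdef, Measure.map_apply he MeasurableSet.univ]; exact measure_lt_top _ _⟩
  -- coordinate functions
  have hGi_meas : ∀ i : Fin d, Measurable fun y => G y i := fun i =>
    ((EuclideanSpace.proj (𝕜 := ℝ) i).continuous.measurable).comp hG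
  have hvi_meas : ∀ i : Fin d, Measurable fun y => v y i := fun i =>
    ((EuclideanSpace.proj (𝕜 := ℝ) i).continuous.measurable).comp hv
  have hfi_meas : ∀ i : Fin d, Measurable fun x => f x i := fun i =>
    ((EuclideanSpace.proj (𝕜 := ℝ) i).continuous.measurable).comp hf
  have hfi_int : ∀ i : Fin d, Integrable (fun x => f x i) lam := fun i =>
    (EuclideanSpace.proj (𝕜 := ℝ) i).integrable_comp hfi
  have hvi_int : ∀ i : Fin d, Integrable (fun y => v y i) μR := fun i =>
    (EuclideanSpace.proj (𝕜 := ℝ) i).integrable_comp hvi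
  have hGi_bd : ∀ i : Fin d, ∀ y, |G y i| ≤ 1 := fun i y =>
    (abs_coord_le_norm (G y) i).trans (hGb y)
  -- v ∘ e is integrable
  have hvei : Integrable (fun x => v (e x)) lam :=
    (integrable_map_measure hv.aestronglyMeasurable he.aemeasurable).mp hvi
  have hvei_int : ∀ i : Fin d, Integrable (fun x => v (e x) i) lam := fun i =>
    (EuclideanSpace.proj (𝕜 := ℝ) i).integrable_comp hvei
  -- products are integrable
  have hprodS_int : ∀ i : Fin d, Integrable (fun x => G (e x) i * f x i) lam := fun i =>
    (hfi_int i).bdd_mul ((hGi_meas i).comp he).aestronglyMeasurable (c := 1) (Filter.Eventually.of_forall fun y => by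
      simpa [Real.norm_eq_abs] using hGi_bd i (e y))
  have hprodR_int : ∀ i : Fin d, Integrable (fun y => G y i * v y i) μR := fun i =>
    (hvi_int i).bdd_mul (hGi_meas i).aestronglyMeasurable (c := 1) (Filter.Eventually.of_forall fun y => by
      simpa [Real.norm_eq_abs] using hGi_bd i y)
  have hprodSv_int : ∀ i : Fin d, Integrable (fun x => G (e x) i * v (e x) i) lam := fun i =>
    (hvei_int i).bdd_mul ((hGi_meas i).comp he).aestronglyMeasurable (c := 1) (Filter.Eventually.of_forall fun y => by
      simpa [Real.norm_eq_abs] using hGi_bd i (e y))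
  -- the sub-sigma-algebra
  have hm : MeasurableSpace.comap e mR ≤ mS := he.comap_le
  haveI : IsFiniteMeasure (lam.trim hm) :=
    ⟨by rw [trim_measurableSet_eq hm (@MeasurableSet.univ S (MeasurableSpace.comap e mR))]; exact measure_lt_top _ _⟩
  -- identification of the conditional expectation
  have hcond : ∀ i : Fin d, (fun x => v (e x) i) =ᵐ[lam] condExp (MeasurableSpace.comap e mR) lam (fun x => (f x i : ℝ)) := by
    intro i
    refine ae_eq_condExp_of_forall_setIntegral_eq hm (hfi_int i)
      (fun s _ _ => (hvei_int i).integrableOn) (fun s hs _ => ?_) ?_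
    · obtain ⟨A, hA, rfl⟩ := hs
      have h1 : ∫ x in e ⁻¹' A, v (e x) i ∂lam = ∫ y in A, v y i ∂μR :=
        (setIntegral_map hA (hvi_meas i).aestronglyMeasurable he.aemeasurable).symm
      have h2 : ∫ y in A, v y i ∂μR = (∫ y in A, v y ∂μR) i := by
        simpa using
          ((EuclideanSpace.proj (𝕜 := ℝ) i).integral_comp_comm
            (hvi.integrableOn (s := A)))
      have h3 : ∫ x in e ⁻¹' A, f x i ∂lam = (∫ x in e ⁻¹' A, f x ∂lam) i := by
        simpa using
          ((EuclideanSpace.proj (𝕜 := ℝ) i).integral_comp_comm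
            (hfi.integrableOn (s := e ⁻¹' A)))
      have h4 := congrArg (fun z : EuclideanSpace ℝ (Fin d) => z i) (hdens A hA)
      simp only at h4
      rw [h1, h2, h4, ← h3]
    · refine ⟨fun x => v (e x) i, ?_, Filter.EventuallyEq.rfl⟩
      have : Measurable[MeasurableSpace.comap e mR] e := measurable_iff_comap_le.mpr le_rfl
      exact ((hvi_meas i).comp this).stronglyMeasurable
  -- pull-out property per coordinate
  have hcoord : ∀ i : Fin d,
      ∫ x, G (e x) i * f x i ∂lam = ∫ y, G y i * v y i ∂μR := by
    intro i
    have hgm : StronglyMeasurable[MeasurableSpace.comap e mR] fun x => (G (e x) i : ℝ) := by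
      have : Measurable[MeasurableSpace.comap e mR] e := measurable_iff_comap_le.mpr le_rfl
      exact ((hGi_meas i).comp this).stronglyMeasurable
    have hpull := condExp_stronglyMeasurable_mul_of_bound hm hgm (hfi_int i) 1
      (Filter.Eventually.of_forall fun x => by
        simpa [Real.norm_eq_abs] using hGi_bd i (e x))
    calc ∫ x, G (e x) i * f x i ∂lam
        = ∫ x, condExp (MeasurableSpace.comap e mR) lam ((fun x => (G (e x) i : ℝ)) * (fun x => (f x i : ℝ))) x ∂lam :=
          (integral_condExp hm).symm
      _ = ∫ x, ((fun x => G (e x) i) * condExp (MeasurableSpace.comap e mR) lam (fun x => (f x i : ℝ))) x ∂lam :=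
          integral_congr_ae hpull
      _ = ∫ x, G (e x) i * v (e x) i ∂lam := by
          refine integral_congr_ae ?_
          filter_upwards [hcond i] with x hx
          simp [Pi.mul_apply, ← hx]
      _ = ∫ y, G y i * v y i ∂μR := by
          rw [hμRdef,
            integral_map he.aemeasurable (show Measurable fun y => G y i * v y i from (hGi_meas i).mul (hvi_meas i)).aestronglyMeasurable]
  -- sum over coordinates
  have hSsum : ∫ x, (inner ℝ (f x) (G (e x)) : ℝ) ∂lam
      = ∑ i : Fin d, ∫ x, G (e x) i * f x i ∂lam := by
    rw [← integral_finset_sum _ (fun i _ => hprodS_int i)]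
    refine integral_congr_ae (Filter.Eventually.of_forall fun x => ?_)
    simp [PiLp.inner_apply, RCLike.inner_apply, mul_comm]
  have hRsum : ∫ y, (inner ℝ (v y) (G y) : ℝ) ∂μR
      = ∑ i : Fin d, ∫ y, G y i * v y i ∂μR := by
    rw [← integral_finset_sum _ (fun i _ => hprodR_int i)]
    refine integral_congr_ae (Filter.Eventually.of_forall fun y => ?_)
    simp [PiLp.inner_apply, RCLike.inner_apply, mul_comm]
  rw [hSsum, hRsum]
  exact Finset.sum_congr rfl fun i _ => hcoord i

end Pairing


/-- Let `R, S` be Polish spaces, `e : S → R` Borel, `f : S → ℝ^d` Borel and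
`λ`-integrable, `λ ∈ M₊(S)`.  Since `e_♯(fλ) ≪ e_♯λ` automatically, the Lebesgue
decomposition of `e_♯(fλ)` with respect to `e_♯λ` has vanishing singular part and a density
`v`, characterized by `∫_A v d(e_♯λ) = ∫_{e⁻¹(A)} f dλ` for all Borel `A ⊆ R`.
If the functional `H(ν|μ) = ∫ √(1+|dν/dμ|²) dμ + |ν^⊥|` satisfies
`H(e_♯(fλ) | e_♯λ) = H(fλ | λ)`, i.e.
`∫ √(1+|v|²) d(e_♯λ) = ∫ √(1+|f|²) dλ`, then `f = v ∘ e` holds `λ`-almost everywhere. -/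
theorem density_pushforward_H_equality
    {R S : Type*}
    [MeasurableSpace R] [TopologicalSpace R] [PolishSpace R] [BorelSpace R]
    [MeasurableSpace S] [TopologicalSpace S] [PolishSpace S] [BorelSpace S]
    {d : ℕ}
    (e : S → R) (he : Measurable e)
    (f : S → EuclideanSpace ℝ (Fin d)) (hf : Measurable f)
    (lam : Measure S) [IsFiniteMeasure lam]
    (hfi : Integrable f lam)
    (v : R → EuclideanSpace ℝ (Fin d)) (hv : Measurable v)
    (hvi : Integrable v (lam.map e))
    (hdens : ∀ A : Set R, MeasurableSet A →
      ∫ y in A, v y ∂(lam.map e) = ∫ x in e ⁻¹' A, f x ∂lam)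
    (hH : ∫ y, Real.sqrt (1 + ‖v y‖ ^ 2) ∂(lam.map e)
        = ∫ x, Real.sqrt (1 + ‖f x‖ ^ 2) ∂lam) :
    f =ᵐ[lam] fun x => v (e x) := by
  classical
  set μR := lam.map e with hμRdef
  haveI hμRfin : IsFiniteMeasure μR :=
    ⟨by rw [hμRdef, Measure.map_apply he MeasurableSet.univ]; exact measure_lt_top _ _⟩
  set φ : EuclideanSpace ℝ (Fin d) → ℝ := fun z => Real.sqrt (1 + ‖z‖ ^ 2) with hφdef
  have hφcont : Continuous φ := by
    apply Real.continuous_sqrt.comp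
    continuity
  have hφpos : ∀ z, 0 < φ z := fun z => sqrt_one_add_sq_pos z
  have hφle : ∀ z : EuclideanSpace ℝ (Fin d), φ z ≤ 1 + ‖z‖ := by
    intro z
    simp only [hφdef]
    have h1 : (1 : ℝ) + ‖z‖ ^ 2 ≤ (1 + ‖z‖) ^ 2 := by nlinarith [norm_nonneg z]
    calc Real.sqrt (1 + ‖z‖ ^ 2) ≤ Real.sqrt ((1 + ‖z‖) ^ 2) := Real.sqrt_le_sqrt h1
      _ = 1 + ‖z‖ := Real.sqrt_sq (by positivity)
  have hnormle : ∀ z : EuclideanSpace ℝ (Fin d), ‖z‖ ≤ φ z := by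
    intro z
    simp only [hφdef]
    calc ‖z‖ = Real.sqrt (‖z‖ ^ 2) := (Real.sqrt_sq (norm_nonneg z)).symm
      _ ≤ Real.sqrt (1 + ‖z‖ ^ 2) := Real.sqrt_le_sqrt (by linarith)
  have hφsq : ∀ z : EuclideanSpace ℝ (Fin d), φ z ^ 2 = 1 + ‖z‖ ^ 2 := by
    intro z
    simp only [hφdef]
    exact Real.sq_sqrt (by positivity)
  set G : R → EuclideanSpace ℝ (Fin d) := fun y => (φ (v y))⁻¹ • v y with hGdef
  have hGmeas : Measurable G :=
    ((hφcont.measurable.comp hv).inv).smul hv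
  have hGb : ∀ y, ‖G y‖ ≤ 1 := by
    intro y
    simp only [hGdef, norm_smul, Real.norm_eq_abs, abs_inv, abs_of_pos (hφpos (v y))]
    rw [inv_mul_le_iff₀ (hφpos (v y)), mul_one]
    exact hnormle (v y)
  -- the function h
  set h : S → ℝ :=
    fun x => φ (f x) - (φ (v (e x)))⁻¹ - inner ℝ (f x) (G (e x)) with hhdef
  have hkey : ∀ z w : EuclideanSpace ℝ (Fin d),
      φ z - (φ w)⁻¹ - (inner ℝ z ((φ w)⁻¹ • w) : ℝ) = φ z - (φ w)⁻¹ * (1 + inner ℝ z w) := by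
    intro z w
    rw [real_inner_smul_right]
    ring
  have hnonneg : ∀ x, 0 ≤ h x := by
    intro x
    simp only [hhdef, hGdef]
    rw [hkey (f x) (v (e x))]
    have hk := key_ineq (f x) (v (e x))
    have hp := hφpos (v (e x))
    rw [sub_nonneg, inv_mul_le_iff₀ hp, mul_comm]
    exact hk
  have heq_of_eq : ∀ x, h x = 0 → f x = v (e x) := by
    intro x hx
    by_contra hne
    have hk := key_ineq_strict (f x) (v (e x)) hne
    have hp := hφpos (v (e x))
    simp only [hhdef, hGdef] at hx
    rw [hkey (f x) (v (e x)), sub_eq_zero] at hx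
    rw [eq_comm, inv_mul_eq_iff_eq_mul₀ hp.ne', mul_comm] at hx
    rw [hx] at hk
    exact lt_irrefl _ hk
  -- measurability / integrability
  have hinner_meas : Measurable fun x => (inner ℝ (f x) (G (e x)) : ℝ) :=
    Measurable.inner hf (hGmeas.comp he)
  have hφf_int : Integrable (fun x => φ (f x)) lam := by
    refine Integrable.mono ((integrable_const (1:ℝ)).add hfi.norm)
      (hφcont.measurable.comp hf).aestronglyMeasurable ?_
    refine Filter.Eventually.of_forall fun x => ?_
    rw [Real.norm_eq_abs, abs_of_pos (hφpos (f x))]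
    calc φ (f x) ≤ 1 + ‖f x‖ := hφle (f x)
      _ ≤ ‖1 + ‖f x‖‖ := le_abs_self _
  have hφvinv_bd : ∀ w : EuclideanSpace ℝ (Fin d), (φ w)⁻¹ ≤ 1 := by
    intro w
    rw [inv_le_one_iff₀]
    right
    simp only [hφdef]
    have h1 : (1:ℝ) ≤ 1 + ‖w‖ ^ 2 := by nlinarith [sq_nonneg ‖w‖]
    nlinarith [Real.sq_sqrt (by positivity : (0:ℝ) ≤ 1 + ‖w‖ ^ 2),
      Real.sqrt_nonneg (1 + ‖w‖ ^ 2), sq_nonneg (Real.sqrt (1 + ‖w‖ ^ 2) - 1)]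
  have hφvinv_int : Integrable (fun x => (φ (v (e x)))⁻¹) lam := by
    refine Integrable.mono (integrable_const (1:ℝ))
      ((hφcont.measurable.comp (hv.comp he)).inv).aestronglyMeasurable ?_
    refine Filter.Eventually.of_forall fun x => ?_
    rw [Real.norm_eq_abs, abs_inv, abs_of_pos (hφpos (v (e x)))]
    simpa using hφvinv_bd (v (e x))
  have hinner_int : Integrable (fun x => (inner ℝ (f x) (G (e x)) : ℝ)) lam := by
    refine Integrable.mono hfi.norm hinner_meas.aestronglyMeasurable ?_
    refine Filter.Eventually.of_forall fun x => ?_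
    rw [Real.norm_eq_abs, Real.norm_eq_abs, abs_of_nonneg (norm_nonneg _)]
    calc |(inner ℝ (f x) (G (e x)) : ℝ)| ≤ ‖f x‖ * ‖G (e x)‖ := abs_real_inner_le_norm _ _
      _ ≤ ‖f x‖ * 1 := mul_le_mul_of_nonneg_left (hGb (e x)) (norm_nonneg _)
      _ = ‖f x‖ := mul_one _
  have hsub1 : Integrable (fun x => φ (f x) - (φ (v (e x)))⁻¹) lam := by
    exact hφf_int.sub hφvinv_int
  have hh_int : Integrable h lam := by
    have : Integrable (fun x => (φ (f x) - (φ (v (e x)))⁻¹)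
        - (inner ℝ (f x) (G (e x)) : ℝ)) lam := hsub1.sub hinner_int
    exact this
  -- the integral of h is zero
  have hpair := pairing_aux e he f hf lam hfi v hv hvi hdens G hGmeas hGb
  have hmap1 : ∫ x, (φ (v (e x)))⁻¹ ∂lam = ∫ y, (φ (v y))⁻¹ ∂μR := by
    rw [hμRdef, integral_map he.aemeasurable
      (show Measurable fun y => (φ (v y))⁻¹ by
        exact (hφcont.measurable.comp hv).inv).aestronglyMeasurable]
  have hRident : ∀ y, (φ (v y))⁻¹ + (inner ℝ (v y) (G y) : ℝ) = φ (v y) := by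
    intro y
    simp only [hGdef]
    rw [real_inner_smul_right, real_inner_self_eq_norm_sq]
    have hp := hφpos (v y)
    have h1 : (φ (v y))⁻¹ + (φ (v y))⁻¹ * ‖v y‖ ^ 2
        = (φ (v y))⁻¹ * (φ (v y) ^ 2) := by
      rw [hφsq]; ring
    rw [h1, sq]
    field_simp
  have hφv_int : Integrable (fun y => φ (v y)) μR := by
    refine Integrable.mono ((integrable_const (1:ℝ)).add hvi.norm)
      (hφcont.measurable.comp hv).aestronglyMeasurable ?_
    refine Filter.Eventually.of_forall fun y => ?_
    rw [Real.norm_eq_abs, abs_of_pos (hφpos (v y))]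
    calc φ (v y) ≤ 1 + ‖v y‖ := hφle (v y)
      _ ≤ ‖1 + ‖v y‖‖ := le_abs_self _
  have hφvinv_intR : Integrable (fun y => (φ (v y))⁻¹) μR := by
    refine Integrable.mono (integrable_const (1:ℝ))
      ((hφcont.measurable.comp hv).inv).aestronglyMeasurable ?_
    refine Filter.Eventually.of_forall fun y => ?_
    rw [Real.norm_eq_abs, abs_inv, abs_of_pos (hφpos (v y))]
    simpa using hφvinv_bd (v y)
  have hinner_intR : Integrable (fun y => (inner ℝ (v y) (G y) : ℝ)) μR := by
    refine Integrable.mono hvi.norm (Measurable.inner hv hGmeas).aestronglyMeasurable ?_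
    refine Filter.Eventually.of_forall fun y => ?_
    rw [Real.norm_eq_abs, Real.norm_eq_abs, abs_of_nonneg (norm_nonneg _)]
    calc |(inner ℝ (v y) (G y) : ℝ)| ≤ ‖v y‖ * ‖G y‖ := abs_real_inner_le_norm _ _
      _ ≤ ‖v y‖ * 1 := mul_le_mul_of_nonneg_left (hGb y) (norm_nonneg _)
      _ = ‖v y‖ := mul_one _
  have hintzero : ∫ x, h x ∂lam = 0 := by
    have e1 : ∫ x, h x ∂lam
        = (∫ x, φ (f x) ∂lam) - (∫ x, (φ (v (e x)))⁻¹ ∂lam)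
          - ∫ x, (inner ℝ (f x) (G (e x)) : ℝ) ∂lam := by
      simp only [hhdef]
      rw [integral_sub hsub1 hinner_int, integral_sub hφf_int hφvinv_int]
    have hsum : (∫ y, (φ (v y))⁻¹ ∂μR) + ∫ y, (inner ℝ (v y) (G y) : ℝ) ∂μR
        = ∫ y, φ (v y) ∂μR := by
      rw [← integral_add hφvinv_intR hinner_intR]
      exact integral_congr_ae (Filter.Eventually.of_forall fun y => hRident y)
    have hHH : ∫ y, φ (v y) ∂μR = ∫ x, φ (f x) ∂lam := by
      simp only [hφdef]
      exact hH
    rw [e1, hmap1, hpair]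
    linarith [hsum, hHH]
  have hzero : h =ᵐ[lam] 0 :=
    (integral_eq_zero_iff_of_nonneg (fun x => hnonneg x) hh_int).mp hintzero
  filter_upwards [hzero] with x hx
  exact heq_of_eq x hx
end

section
/- Let R, S be Polish spaces, e : S → R Borel, f : S → ℝ^d Borel, λ ∈ M₊(S) with f ∈ L^p(λ;ℝ^d) for some p > 1, and suppose e_♯(fλ) ≪ e_♯λ with density v satisfying ∫_R |v|^p d(e_♯λ) = ∫_S |f|^p dλ. Then f = v ∘ e λ-almost everywhere. Moreover this conclusion can fail for p = 1: there exist S = ℝ², R = ℝ, λ, f, e with ∫|v| d(e_♯λ) = ∫|f| dλ but f ≠ v∘e on a set of positive λ-measure. -/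
open MeasureTheory Set ENNReal Real
open scoped RealInnerProductSpace

section AuxLemmas
lemma rpow_tangent_lt' {p : ℝ} (hp : 1 < p) {s t : ℝ} (hs : 0 ≤ s) (ht : 0 ≤ t)
    (hne : s ≠ t) : s ^ p + p * s ^ (p - 1) * (t - s) < t ^ p := by
  have hp0 : (0:ℝ) < p := lt_trans one_pos hp
  rcases eq_or_lt_of_le hs with hs0 | hs0
  · -- s = 0
    rw [← hs0]
    have ht0 : 0 < t := lt_of_le_of_ne ht (by rw [← hs0] at hne; exact Ne.symm hne ∘ Eq.symm)
    rw [Real.zero_rpow hp0.ne', Real.zero_rpow (by linarith : p - 1 ≠ 0)]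
    simpa using Real.rpow_pos_of_pos ht0 p
  · -- s > 0
    set F : ℝ → ℝ := fun x => x ^ p - p * s ^ (p - 1) * x with hF
    have hderiv : ∀ x : ℝ, HasDerivAt F (p * x ^ (p - 1) - p * s ^ (p - 1)) x := by
      intro x
      have h1 : HasDerivAt (fun x : ℝ => x ^ p) (p * x ^ (p - 1)) x :=
        Real.hasDerivAt_rpow_const (Or.inr hp.le)
      have h2 : HasDerivAt (fun x : ℝ => p * s ^ (p - 1) * x) (p * s ^ (p - 1)) x := by
        simpa using (hasDerivAt_id x).const_mul (p * s ^ (p - 1))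
      exact h1.sub h2
    have hcont : Continuous F := by
      have : Continuous fun x : ℝ => x ^ p := by
        rw [continuous_iff_continuousAt]
        exact fun x => Real.continuousAt_rpow_const x p (Or.inr hp0.le)
      exact this.sub (continuous_const.mul continuous_id)
    have key : F s < F t := by
      rcases lt_or_gt_of_ne hne with hst | hts
      · have hmono : StrictMonoOn F (Set.Ici s) := by
          refine strictMonoOn_of_deriv_pos (convex_Ici s) hcont.continuousOn ?_
          intro x hx
          rw [interior_Ici] at hx
          rw [(hderiv x).deriv]
          have : s ^ (p - 1) < x ^ (p - 1) :=
            Real.rpow_lt_rpow hs hx (by linarith)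
          nlinarith
        exact hmono (Set.self_mem_Ici) (Set.mem_Ici.mpr hst.le) hst
      · have hanti : StrictAntiOn F (Set.Icc 0 s) := by
          refine strictAntiOn_of_deriv_neg (convex_Icc 0 s) hcont.continuousOn ?_
          intro x hx
          rw [interior_Icc] at hx
          rw [(hderiv x).deriv]
          have : x ^ (p - 1) < s ^ (p - 1) :=
            Real.rpow_lt_rpow hx.1.le hx.2 (by linarith)
          nlinarith
        exact hanti (Set.mem_Icc.mpr ⟨ht, hts.le⟩) (Set.mem_Icc.mpr ⟨hs, le_refl s⟩) hts
    have hsp : s ^ (p - 1) * s = s ^ p := by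
      rw [← Real.rpow_add_one hs0.ne' (p - 1)]
      norm_num
    simp only [hF] at key
    nlinarith

lemma rpow_tangent_le' {p : ℝ} (hp : 1 < p) {s t : ℝ} (hs : 0 ≤ s) (ht : 0 ≤ t) :
    s ^ p + p * s ^ (p - 1) * (t - s) ≤ t ^ p := by
  rcases eq_or_ne s t with rfl | hne
  · simp
  · exact (rpow_tangent_lt' hp hs ht hne).le

variable {F : Type*} [NormedAddCommGroup F] [InnerProductSpace ℝ F]

lemma inner_term_le' {p : ℝ} (hp : 1 < p) (x y : F) :
    p * ‖y‖ ^ (p - 2) * (⟪y, x⟫ - ‖y‖ * ‖y‖) ≤ p * ‖y‖ ^ (p - 1) * (‖x‖ - ‖y‖) := by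
  have hp0 : (0:ℝ) < p := lt_trans one_pos hp
  rcases eq_or_lt_of_le (norm_nonneg y) with hy0 | hy0
  · have hy : y = 0 := norm_eq_zero.mp hy0.symm
    subst hy
    simp [Real.zero_rpow (by linarith : p - 1 ≠ 0)]
  · have hin : ⟪y, x⟫ ≤ ‖y‖ * ‖x‖ := real_inner_le_norm y x
    have hsp : ‖y‖ ^ (p - 2) * ‖y‖ = ‖y‖ ^ (p - 1) := by
      rw [← Real.rpow_add_one hy0.ne' (p - 2)]
      congr 1; ring
    have hpos : (0:ℝ) < ‖y‖ ^ (p - 2) := Real.rpow_pos_of_pos hy0 _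
    have hint := mul_le_mul_of_nonneg_left (sub_le_sub_right hin (‖y‖ * ‖y‖))
      (le_of_lt (mul_pos hp0 hpos))
    have heq : p * ‖y‖ ^ (p - 2) * (‖y‖ * ‖x‖ - ‖y‖ * ‖y‖)
        = p * ‖y‖ ^ (p - 1) * (‖x‖ - ‖y‖) := by rw [← hsp]; ring
    nlinarith [hint, heq]

lemma key_le' {p : ℝ} (hp : 1 < p) (x y : F) :
    ‖y‖ ^ p + p * ‖y‖ ^ (p - 2) * (⟪y, x⟫ - ‖y‖ * ‖y‖) ≤ ‖x‖ ^ p := by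
  calc ‖y‖ ^ p + p * ‖y‖ ^ (p - 2) * (⟪y, x⟫ - ‖y‖ * ‖y‖)
      ≤ ‖y‖ ^ p + p * ‖y‖ ^ (p - 1) * (‖x‖ - ‖y‖) :=
        add_le_add_right (inner_term_le' hp x y) _
    _ ≤ ‖x‖ ^ p := rpow_tangent_le' hp (norm_nonneg y) (norm_nonneg x)

lemma key_eq' {p : ℝ} (hp : 1 < p) {x y : F}
    (h : ‖y‖ ^ p + p * ‖y‖ ^ (p - 2) * (⟪y, x⟫ - ‖y‖ * ‖y‖) = ‖x‖ ^ p) : x = y := by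
  have hp0 : (0:ℝ) < p := lt_trans one_pos hp
  have hnorm : ‖y‖ = ‖x‖ := by
    by_contra hne
    have h1 := inner_term_le' hp x y
    have h2 := rpow_tangent_lt' hp (norm_nonneg y) (norm_nonneg x) hne
    linarith
  rcases eq_or_lt_of_le (norm_nonneg y) with hy0 | hy0
  · have hy : y = 0 := norm_eq_zero.mp hy0.symm
    have hx : x = 0 := norm_eq_zero.mp (by rw [← hnorm, ← hy0])
    rw [hx, hy]
  · -- ‖y‖ > 0, and equality forces inner product equality
    have hyp : ‖y‖ ^ p = ‖x‖ ^ p := by rw [hnorm]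
    have hpos : (0:ℝ) < ‖y‖ ^ (p - 2) := Real.rpow_pos_of_pos hy0 _
    have hinner : ⟪y, x⟫ = ‖y‖ * ‖x‖ := by
      have : p * ‖y‖ ^ (p - 2) * (⟪y, x⟫ - ‖y‖ * ‖y‖) = 0 := by linarith
      have h3 : ⟪y, x⟫ - ‖y‖ * ‖y‖ = 0 := by
        rcases mul_eq_zero.mp this with h | h
        · rcases mul_eq_zero.mp h with h | h
          · exact absurd h hp0.ne'
          · exact absurd h hpos.ne'
        · exact h
      rw [← hnorm]
      linarith
    have hsm := inner_eq_norm_mul_iff_real.mp hinner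
    rw [← hnorm] at hsm
    exact (smul_right_injective F hy0.ne' hsm).symm

lemma young_aux {p : ℝ} (hp : 1 < p) {s t : ℝ} (hs : 0 ≤ s) (ht : 0 ≤ t) :
    s ^ (p - 1) * t ≤ t ^ p + s ^ p := by
  have hpq := Real.HolderConjugate.conjExponent hp
  have h := Real.young_inequality_of_nonneg ht (Real.rpow_nonneg hs (p - 1)) hpq
  have h2 : (s ^ (p - 1)) ^ p.conjExponent = s ^ p := by
    rw [← Real.rpow_mul hs]
    congr 1
    have h1 : p - 1 ≠ 0 := by linarith
    rw [Real.conjExponent, ← mul_div_assoc]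
    exact mul_div_cancel_left₀ p h1
  rw [h2] at h
  have hq1 : 1 ≤ p.conjExponent := by rw [Real.conjExponent, le_div_iff₀ (by linarith)]; linarith
  have d1 : t ^ p / p ≤ t ^ p := div_le_self (Real.rpow_nonneg ht p) hp.le
  have d2 : s ^ p / p.conjExponent ≤ s ^ p := div_le_self (Real.rpow_nonneg hs p) hq1
  nlinarith [h]

lemma coord_abs_le_norm {d : ℕ} (z : EuclideanSpace ℝ (Fin d)) (i : Fin d) : |z i| ≤ ‖z‖ := by
  rw [EuclideanSpace.norm_eq, ← Real.sqrt_sq_eq_abs]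
  apply Real.sqrt_le_sqrt
  exact Finset.single_le_sum (f := fun j => ‖z j‖ ^ 2) (fun j _ => by positivity)
    (Finset.mem_univ i) |>.trans_eq' (by simp [Real.norm_eq_abs, sq_abs])

lemma rpow_mul_self {s : ℝ} (hs : 0 ≤ s) {a : ℝ} (ha : a + 1 ≠ 0) :
    s ^ a * s = s ^ (a + 1) := by
  rcases eq_or_lt_of_le hs with h0 | h0
  · rw [← h0]
    simp [Real.zero_rpow ha]
  · rw [Real.rpow_add_one h0.ne']

lemma sum_identity {d : ℕ} (p : ℝ) (a b : EuclideanSpace ℝ (Fin d)) :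
    ∑ i, (p * ‖a‖ ^ (p - 2) * a i) * (b i - a i)
      = p * ‖a‖ ^ (p - 2) * (⟪a, b⟫ - ‖a‖ * ‖a‖) := by
  rw [← real_inner_self_eq_norm_mul_norm a]
  simp only [PiLp.inner_apply, RCLike.inner_apply, conj_trivial]
  rw [← Finset.sum_sub_distrib, Finset.mul_sum]
  exact Finset.sum_congr rfl fun i _ => by ring

lemma prod_bound_pt {d : ℕ} {p : ℝ} (hp : 1 < p) (a b : EuclideanSpace ℝ (Fin d)) (i : Fin d) :
    ‖(p * ‖a‖ ^ (p - 2) * a i) * (b i - a i)‖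
      ≤ p * ((‖b‖ ^ p + ‖a‖ ^ p) + ‖a‖ ^ p) := by
  have hp0 : (0:ℝ) < p := lt_trans one_pos hp
  have hs : (0:ℝ) ≤ ‖a‖ := norm_nonneg a
  have ht : (0:ℝ) ≤ ‖b‖ := norm_nonneg b
  have hrp : (0:ℝ) ≤ ‖a‖ ^ (p - 2) := Real.rpow_nonneg hs _
  have h1 : |a i| ≤ ‖a‖ := coord_abs_le_norm a i
  have h2 : |b i - a i| ≤ ‖b‖ + ‖a‖ :=
    (abs_sub _ _).trans (add_le_add (coord_abs_le_norm b i) (coord_abs_le_norm a i))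
  have e1 : ‖a‖ ^ (p - 2) * ‖a‖ = ‖a‖ ^ (p - 1) := by
    rw [rpow_mul_self hs (by intro hc; linarith : (p - 2) + 1 ≠ 0)]
    congr 1; ring
  have e2 : ‖a‖ ^ (p - 1) * ‖a‖ = ‖a‖ ^ p := by
    rw [rpow_mul_self hs (by intro hc; linarith : (p - 1) + 1 ≠ 0)]
    congr 1; ring
  have hy : ‖a‖ ^ (p - 1) * ‖b‖ ≤ ‖b‖ ^ p + ‖a‖ ^ p := young_aux hp hs ht
  rw [Real.norm_eq_abs, abs_mul, abs_mul, abs_mul, abs_of_pos hp0, abs_of_nonneg hrp]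
  have step1 : p * |a i| * |b i - a i| ≤ p * ‖a‖ * (‖b‖ + ‖a‖) := by
    apply mul_le_mul (mul_le_mul_of_nonneg_left h1 hp0.le) h2 (abs_nonneg _) (by positivity)
  have hrp1 : (0:ℝ) ≤ ‖a‖ ^ (p - 1) := Real.rpow_nonneg hs _
  nlinarith [mul_le_mul_of_nonneg_left h2
      (mul_nonneg (mul_nonneg hp0.le hrp) (abs_nonneg (a i))),
    mul_le_mul_of_nonneg_right (mul_le_mul_of_nonneg_left h1 (mul_nonneg hp0.le hrp))
      (by positivity : (0:ℝ) ≤ ‖b‖ + ‖a‖),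
    mul_le_mul_of_nonneg_left hy hp0.le, e1, e2,
    mul_le_mul_of_nonneg_right e1.le (by positivity : (0:ℝ) ≤ ‖b‖ + ‖a‖)]

lemma D_nonneg_pt {d : ℕ} {p : ℝ} (hp : 1 < p) (a b : EuclideanSpace ℝ (Fin d)) :
    0 ≤ ‖b‖ ^ p - ‖a‖ ^ p - ∑ i, (p * ‖a‖ ^ (p - 2) * a i) * (b i - a i) := by
  rw [sum_identity]
  linarith [key_le' hp b a]

lemma D_eq_pt {d : ℕ} {p : ℝ} (hp : 1 < p) {a b : EuclideanSpace ℝ (Fin d)}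
    (h : ‖b‖ ^ p - ‖a‖ ^ p - ∑ i, (p * ‖a‖ ^ (p - 2) * a i) * (b i - a i) = 0) : b = a := by
  rw [sum_identity] at h
  exact key_eq' hp (by linarith)


/-- the sigma-algebra generated by `e` -/
def mcomap {S R : Type*} [MeasurableSpace R] (e : S → R) : MeasurableSpace S :=
  MeasurableSpace.comap e inferInstance

lemma dirac_withDensity {α : Type*} [MeasurableSpace α] [MeasurableSingletonClass α]
    (a : α) (f : α → ℝ≥0∞) (hf : Measurable f) :
    (Measure.dirac a).withDensity f = f a • Measure.dirac a := by
  classical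
  ext s hs
  rw [withDensity_apply _ hs, setLIntegral_dirac' hf hs, Measure.smul_apply,
    Measure.dirac_apply' _ hs, smul_eq_mul, Set.indicator_apply]
  split <;> simp


end AuxLemmas

/-- (a) Let `R, S` be Polish spaces, `e : S → R` Borel, `f : S → ℝ^d`
Borel with `f ∈ L^p(λ;ℝ^d)` for some `p > 1`, and suppose `e_♯(fλ) ≪ e_♯λ` with density
`v` (i.e. `∫_A v d(e_♯λ) = ∫_{e⁻¹(A)} f dλ` for all Borel `A`) satisfying
`∫ |v|^p d(e_♯λ) = ∫ |f|^p dλ`.  Then `f = v ∘ e` holds `λ`-a.e.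
(b) This can fail for `p = 1`: there exist `S = ℝ²`, `R = ℝ`, a finite measure `λ`,
nonnegative Borel `f`, Borel `e`, and a density `v` of `e_♯(fλ)` w.r.t. `e_♯λ` with
`∫ v d(e_♯λ) = ∫ f dλ` but `f ≠ v ∘ e` on a set of positive `λ`-measure. -/
theorem density_pushforward_Lp_equality_and_L1_counterexample
    {R S : Type*}
    [MeasurableSpace R] [TopologicalSpace R] [PolishSpace R] [BorelSpace R]
    [MeasurableSpace S] [TopologicalSpace S] [PolishSpace S] [BorelSpace S]
    {d : ℕ} (p : ℝ) (hp : 1 < p)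
    (e : S → R) (he : Measurable e)
    (f : S → EuclideanSpace ℝ (Fin d)) (hf : Measurable f)
    (lam : Measure S) [IsFiniteMeasure lam]
    (hfp : MemLp f (ENNReal.ofReal p) lam)
    (v : R → EuclideanSpace ℝ (Fin d)) (hv : Measurable v)
    (hvp : MemLp v (ENNReal.ofReal p) (lam.map e))
    (hdens : ∀ A : Set R, MeasurableSet A →
      ∫ y in A, v y ∂(lam.map e) = ∫ x in e ⁻¹' A, f x ∂lam)
    (hnorm : ∫ y, ‖v y‖ ^ p ∂(lam.map e) = ∫ x, ‖f x‖ ^ p ∂lam) :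
    (f =ᵐ[lam] fun x => v (e x)) ∧
    (∃ (lam' : Measure (ℝ × ℝ)) (f' : ℝ × ℝ → ℝ≥0∞) (e' : ℝ × ℝ → ℝ) (v' : ℝ → ℝ≥0∞),
      Measurable f' ∧ Measurable e' ∧ Measurable v' ∧ IsFiniteMeasure lam' ∧
      (∫⁻ x, f' x ∂lam') < ⊤ ∧
      (lam'.withDensity f').map e' = (lam'.map e').withDensity v' ∧
      (∫⁻ y, v' y ∂(lam'.map e') = ∫⁻ x, f' x ∂lam') ∧
      ¬ (f' =ᵐ[lam'] fun x => v' (e' x))) := by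
  constructor
  · -- Part (a)
    have hp0 : (0:ℝ) < p := lt_trans one_pos hp
    have hP1 : 1 ≤ ENNReal.ofReal p := ENNReal.one_le_ofReal.mpr hp.le
    have hP0 : ENNReal.ofReal p ≠ 0 := by
      simp only [ne_eq, ENNReal.ofReal_eq_zero, not_le]; linarith
    have hPtop : ENNReal.ofReal p ≠ ∞ := ENNReal.ofReal_ne_top
    have hPtoReal : (ENNReal.ofReal p).toReal = p := ENNReal.toReal_ofReal hp0.le
    have hm : mcomap e ≤ _ := he.comap_le
    haveI : SigmaFinite (lam.trim hm) := by infer_instance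
    have hem : Measurable[mcomap e] e := fun s hs => ⟨s, hs, rfl⟩
    have hgmeas : Measurable (fun x => v (e x)) := hv.comp he
    have hgp : MemLp (fun x => v (e x)) (ENNReal.ofReal p) lam :=
      (memLp_map_measure_iff hv.aestronglyMeasurable he.aemeasurable).mp hvp
    have hf_int : Integrable f lam := hfp.integrable hP1
    have hg_int : Integrable (fun x => v (e x)) lam := hgp.integrable hP1
    have hnp_meas : Measurable fun z : EuclideanSpace ℝ (Fin d) => ‖z‖ ^ p :=
      ((Real.continuous_rpow_const hp0.le).comp continuous_norm).measurable
    have hIf : Integrable (fun x => ‖f x‖ ^ p) lam := by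
      have := hfp.integrable_norm_rpow hP0 hPtop
      rwa [hPtoReal] at this
    have hIg : Integrable (fun x => ‖v (e x)‖ ^ p) lam := by
      have := hgp.integrable_norm_rpow hP0 hPtop
      rwa [hPtoReal] at this
    have hmv : AEStronglyMeasurable (fun y => ‖v y‖ ^ p) (lam.map e) :=
      (hnp_meas.comp hv).aestronglyMeasurable
    have hnorm_g : ∫ x, ‖v (e x)‖ ^ p ∂lam = ∫ x, ‖f x‖ ^ p ∂lam := by
      rw [← hnorm, integral_map he.aemeasurable hmv]
    have hsetint : ∀ s, MeasurableSet[mcomap e] s →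
        ∫ x in s, v (e x) ∂lam = ∫ x in s, f x ∂lam := by
      rintro s ⟨A, hA, rfl⟩
      rw [← hdens A hA, setIntegral_map hA hv.aestronglyMeasurable he.aemeasurable]
    -- coordinates
    set u : Fin d → S → ℝ := fun i x => f x i - v (e x) i with hu
    set ψ : Fin d → S → ℝ := fun i x => p * ‖v (e x)‖ ^ (p - 2) * v (e x) i with hψ
    have hw_meas : ∀ i : Fin d, Measurable (fun y => p * ‖v y‖ ^ (p - 2) * v y i) := by
      intro i
      classical
      have heq : (fun y => p * ‖v y‖ ^ (p - 2) * v y i) = fun y =>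
          if v y = 0 then 0 else p * (Real.exp (Real.log ‖v y‖ * (p - 2)) * v y i) := by
        funext y
        split_ifs with h
        · simp [h]
        · rw [Real.rpow_def_of_pos (norm_pos_iff.mpr h)]
          ring
      rw [heq]
      exact Measurable.ite (hv (measurableSet_singleton 0)) measurable_const
        ((((hv.norm.log.mul_const (p - 2)).exp).mul
          ((EuclideanSpace.proj i).continuous.measurable.comp hv)).const_mul p)
    have hψ_meas : ∀ i, Measurable (ψ i) := fun i => (hw_meas i).comp he
    have hψ_sm : ∀ i, StronglyMeasurable[mcomap e] (ψ i) :=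
      fun i => ((hw_meas i).comp hem).stronglyMeasurable
    have hprojf : ∀ i : Fin d, Measurable fun x => f x i := fun i =>
      ((EuclideanSpace.proj (𝕜 := ℝ) i).continuous.measurable).comp hf
    have hprojg : ∀ i : Fin d, Measurable fun x => v (e x) i := fun i =>
      ((EuclideanSpace.proj (𝕜 := ℝ) i).continuous.measurable).comp hgmeas
    have hu_meas : ∀ i, Measurable (u i) := fun i => (hprojf i).sub (hprojg i)
    have hprojf_int : ∀ i : Fin d, Integrable (fun x => f x i) lam := fun i =>
      (EuclideanSpace.proj (𝕜 := ℝ) i).integrable_comp hf_int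
    have hprojg_int : ∀ i : Fin d, Integrable (fun x => v (e x) i) lam := fun i =>
      (EuclideanSpace.proj (𝕜 := ℝ) i).integrable_comp hg_int
    have hu_int : ∀ i, Integrable (u i) lam := fun i => (hprojf_int i).sub (hprojg_int i)
    have hbound_int : Integrable (fun x => p * ((‖f x‖ ^ p + ‖v (e x)‖ ^ p) + ‖v (e x)‖ ^ p)) lam :=
      ((hIf.add hIg).add hIg).const_mul p
    have hψu_int : ∀ i, Integrable (ψ i * u i) lam := by
      intro i
      refine Integrable.mono' hbound_int
        (((hψ_meas i).mul (hu_meas i)).aestronglyMeasurable) (ae_of_all _ fun x => ?_)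
      exact prod_bound_pt hp (v (e x)) (f x) i
    -- conditional expectation of u i vanishes
    have hu0 : ∀ i, lam[u i|mcomap e] =ᵐ[lam] 0 := by
      intro i
      refine (ae_eq_condExp_of_forall_setIntegral_eq hm (hu_int i)
        (fun s _ _ => (integrable_zero _ _ _).integrableOn)
        (fun s hs _ => ?_) ⟨0, stronglyMeasurable_const, Filter.EventuallyEq.rfl⟩).symm
      have hif : Integrable (fun x => f x i) (lam.restrict s) :=
        (EuclideanSpace.proj (𝕜 := ℝ) i).integrable_comp hf_int.integrableOn
      have hig : Integrable (fun x => v (e x) i) (lam.restrict s) :=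
        (EuclideanSpace.proj (𝕜 := ℝ) i).integrable_comp hg_int.integrableOn
      have e1 : ∫ x in s, f x i ∂lam = (EuclideanSpace.proj (𝕜 := ℝ) i) (∫ x in s, f x ∂lam) :=
        (EuclideanSpace.proj (𝕜 := ℝ) i).integral_comp_comm hf_int.integrableOn
      have e2 : ∫ x in s, v (e x) i ∂lam
          = (EuclideanSpace.proj (𝕜 := ℝ) i) (∫ x in s, v (e x) ∂lam) :=
        (EuclideanSpace.proj (𝕜 := ℝ) i).integral_comp_comm hg_int.integrableOn
      have h1 : ∫ x in s, u i x ∂lam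
          = (EuclideanSpace.proj (𝕜 := ℝ) i) (∫ x in s, f x ∂lam)
            - (EuclideanSpace.proj (𝕜 := ℝ) i) (∫ x in s, v (e x) ∂lam) := by
        rw [← e1, ← e2, ← integral_sub hif hig]
        try rfl
      simp only [Pi.zero_apply, integral_zero]
      rw [h1, hsetint s hs, sub_self]
    -- cross terms vanish
    have hcross : ∀ i, ∫ x, (ψ i * u i) x ∂lam = 0 := by
      intro i
      have hpull := condExp_mul_of_stronglyMeasurable_left (hψ_sm i) (hψu_int i) (hu_int i)
      calc ∫ x, (ψ i * u i) x ∂lam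
          = ∫ x, (lam[ψ i * u i|mcomap e]) x ∂lam := (integral_condExp hm).symm
        _ = ∫ x, (ψ i * lam[u i|mcomap e]) x ∂lam := integral_congr_ae hpull
        _ = 0 := by
            have hz : (ψ i * lam[u i|mcomap e]) =ᵐ[lam] 0 := by
              filter_upwards [hu0 i] with x hx
              simp [Pi.mul_apply, hx]
            rw [integral_congr_ae hz]
            simp
    have hC_int : Integrable (fun x => ∑ i, (ψ i * u i) x) lam :=
      integrable_finset_sum _ fun i _ => hψu_int i
    have hCsum : ∫ x, (∑ i, (ψ i * u i) x) ∂lam = 0 := by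
      rw [integral_finset_sum _ fun i _ => hψu_int i]
      exact Finset.sum_eq_zero fun i _ => hcross i
    have hIfg : Integrable (fun x => ‖f x‖ ^ p - ‖v (e x)‖ ^ p) lam := hIf.sub hIg
    have hD_int : Integrable
        (fun x => ‖f x‖ ^ p - ‖v (e x)‖ ^ p - ∑ i, (ψ i * u i) x) lam :=
      hIfg.sub hC_int
    have hDzero : ∫ x, (‖f x‖ ^ p - ‖v (e x)‖ ^ p - ∑ i, (ψ i * u i) x) ∂lam = 0 := by
      rw [integral_sub hIfg hC_int, integral_sub hIf hIg, hnorm_g, hCsum]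
      ring
    have hae := (integral_eq_zero_iff_of_nonneg
      (fun x => D_nonneg_pt hp (v (e x)) (f x)) hD_int).mp hDzero
    filter_upwards [hae] with x hx
    exact D_eq_pt hp hx
  · -- Part (b)
    set a : ℝ × ℝ := (0, -1)
    set b : ℝ × ℝ := (0, 1)
    set lam' : Measure (ℝ × ℝ) :=
      (1/2 : ℝ≥0∞) • Measure.dirac a + (1/2 : ℝ≥0∞) • Measure.dirac b with hlam
    set f' : ℝ × ℝ → ℝ≥0∞ := fun x => if x.2 = 1 then 2 else 0 with hf'
    have hf'm : Measurable f' := by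
      apply Measurable.ite _ measurable_const measurable_const
      exact measurable_snd (measurableSet_singleton 1)
    have hfa : f' a = 0 := by norm_num [hf', a]
    have hfb : f' b = 2 := by norm_num [hf', b]
    have hmap : lam'.map Prod.fst = Measure.dirac (0 : ℝ) := by
      rw [hlam, Measure.map_add _ _ measurable_fst, Measure.map_smul, Measure.map_smul,
        Measure.map_dirac' measurable_fst, Measure.map_dirac' measurable_fst]
      show (1/2 : ℝ≥0∞) • Measure.dirac (0:ℝ) + (1/2 : ℝ≥0∞) • Measure.dirac (0:ℝ) = _
      rw [← add_smul, ENNReal.add_halves, one_smul]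
    have hlint : (∫⁻ x, f' x ∂lam') = 1 := by
      rw [hlam, lintegral_add_measure, lintegral_smul_measure, lintegral_smul_measure,
        lintegral_dirac, lintegral_dirac, hfa, hfb]
      simp
      rw [ENNReal.inv_mul_cancel] <;> norm_num
    refine ⟨lam', f', Prod.fst, fun _ => 1, hf'm, measurable_fst, measurable_const, ?_, ?_, ?_, ?_, ?_⟩
    · constructor
      rw [hlam]
      simp [ENNReal.add_halves]
    · rw [hlint]; exact one_lt_top
    · have h1 : (fun _ : ℝ => (1:ℝ≥0∞)) = 1 := rfl
      rw [h1, withDensity_one, hmap, hlam, withDensity_add_measure,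
        withDensity_smul_measure, withDensity_smul_measure,
        dirac_withDensity _ _ hf'm, dirac_withDensity _ _ hf'm, hfa, hfb,
        Measure.map_add _ _ measurable_fst]
      simp only [zero_smul, Measure.map_smul, Measure.map_zero, Measure.map_dirac' measurable_fst,
        smul_zero, zero_add, smul_smul]
      have h2 : (1/2 : ℝ≥0∞) * 2 = 1 := by rw [ENNReal.div_mul_cancel] <;> norm_num
      rw [h2, one_smul]
    · rw [hmap, hlint, lintegral_one]
      simp
    · intro h
      have hne : lam' ≠ 0 := by
        intro h0
        have : lam' univ = 0 := by rw [h0]; simp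
        rw [hlam] at this
        simp [ENNReal.add_halves] at this
      haveI := ae_neBot.mpr hne
      obtain ⟨x, hx⟩ := h.exists
      simp only [hf'] at hx
      split at hx <;> simp at hx
end

section
/- Let Y be a Polish space and f : Y → ℝ^d Borel. For any p ≥ 1, the set 𝔇_f := {(μ,ν) ∈ M₊(Y) × M(Y;ℝ^d) : f ∈ L^p(μ) and ν = fμ} is a Borel subset of M₊(Y) × M(Y;ℝ^d) (each factor with the narrow topology). -/
open MeasureTheory ENNReal BoundedContinuousFunction

noncomputable section

/-- Integration of a bounded continuous function against a signed measure, via the Jordan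
decomposition. -/
def sInt {X : Type*} [MeasurableSpace X] [TopologicalSpace X]
    (ν : SignedMeasure X) (φ : X →ᵇ ℝ) : ℝ :=
  (∫ x, φ x ∂ν.toJordanDecomposition.posPart) - ∫ x, φ x ∂ν.toJordanDecomposition.negPart

/-- The narrow (weak) topology on signed measures. -/
def narrowTopSM (X : Type*) [MeasurableSpace X] [TopologicalSpace X] :
    TopologicalSpace (SignedMeasure X) :=
  TopologicalSpace.induced (fun ν => fun φ : X →ᵇ ℝ => sInt ν φ) inferInstance

/-- The narrow topology on `ℝ^d`-valued measures, modelled as `d`-tuples of signed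
measures. -/
def narrowTopVM (X : Type*) [MeasurableSpace X] [TopologicalSpace X] (d : ℕ) :
    TopologicalSpace (Fin d → SignedMeasure X) :=
  @Pi.topologicalSpace (Fin d) (fun _ => SignedMeasure X) (fun _ => narrowTopSM X)

namespace GDAux
open Filter Set Topology Metric TopologicalSpace
open scoped NNReal


variable {Y : Type*} [MeasurableSpace Y] [TopologicalSpace Y] [PolishSpace Y] [BorelSpace Y]

/-- countable separating family of nonneg bounded continuous test functions -/
lemma exists_separating :
    ∃ g : ℕ → ℕ → (Y →ᵇ ℝ≥0), ∀ (μ₁ μ₂ : Measure Y), IsFiniteMeasure μ₁ → IsFiniteMeasure μ₂ →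
      (∀ k n, ∫⁻ x, g k n x ∂μ₁ = ∫⁻ x, g k n x ∂μ₂) → μ₁ = μ₂ := by
  letI := upgradeIsCompletelyMetrizable Y
  obtain ⟨s, s_cnt, s_dense⟩ := TopologicalSpace.exists_countable_dense Y
  set B : Set (Set Y) := insert univ
    ((fun p : Y × ℚ => Metric.closedBall p.1 (p.2 : ℝ)) '' (s ×ˢ univ)) with hB
  have B_cnt : B.Countable := (Set.Countable.image (s_cnt.prod countable_univ) _).insert _
  have B_closed : ∀ b ∈ B, IsClosed b := by
    rintro b (rfl | ⟨⟨c, q⟩, -, rfl⟩)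
    · exact isClosed_univ
    · exact Metric.isClosed_closedBall
  obtain ⟨e, he⟩ := B_cnt.exists_eq_range ⟨univ, mem_insert _ _⟩
  -- the countable π-system of finite intersections
  set 𝒞 : Set (Set Y) := range (fun T : {T : Finset ℕ // T.Nonempty} => ⋂ i ∈ (T : Finset ℕ), e i)
    with h𝒞
  have e_mem : ∀ i, e i ∈ B := fun i => he ▸ mem_range_self i
  have C_closed : ∀ c ∈ 𝒞, IsClosed c := by
    rintro c ⟨T, rfl⟩
    exact isClosed_biInter fun i _ => B_closed _ (e_mem i)
  have C_cnt : 𝒞.Countable := countable_range _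
  have B_sub_C : B ⊆ 𝒞 := by
    rintro b hb
    rw [he] at hb
    obtain ⟨i, rfl⟩ := hb
    exact ⟨⟨{i}, Finset.singleton_nonempty i⟩, by simp⟩
  have C_pi : IsPiSystem 𝒞 := by
    rintro _ ⟨T₁, rfl⟩ _ ⟨T₂, rfl⟩ hne
    refine ⟨⟨(T₁ : Finset ℕ) ∪ T₂, Finset.Nonempty.mono Finset.subset_union_left T₁.2⟩, ?_⟩
    simp only
    ext x
    simp only [Set.mem_iInter, Set.mem_inter_iff, Finset.mem_union]
    constructor
    · intro h
      exact ⟨fun i hi => h i (Or.inl hi), fun i hi => h i (Or.inr hi)⟩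
    · rintro ⟨h1, h2⟩ i (hi | hi)
      exacts [h1 i hi, h2 i hi]
  have gen : ‹MeasurableSpace Y› = MeasurableSpace.generateFrom 𝒞 := by
    refine le_antisymm ?_ (MeasurableSpace.generateFrom_le fun t ht => (C_closed t ht).measurableSet)
    rw [BorelSpace.measurable_eq (α := Y), borel]
    refine MeasurableSpace.generateFrom_le fun U hU => ?_
    have : U = ⋃₀ {b ∈ B | b ⊆ U} := by
      apply Subset.antisymm ?_ (sUnion_subset fun b hb => hb.2)
      intro x hx
      have hU' : IsOpen U := hU
      obtain ⟨ε, ε_pos, hε⟩ := Metric.isOpen_iff.mp hU' x hx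
      obtain ⟨c, hc, hdist⟩ := s_dense.exists_dist_lt x (show 0 < ε / 4 by linarith)
      obtain ⟨q, hq1, hq2⟩ := exists_rat_btwn (show ε / 4 < ε / 2 by linarith)
      refine ⟨Metric.closedBall c q, ⟨?_, ?_⟩, ?_⟩
      · exact mem_insert_of_mem _ ⟨⟨c, q⟩, ⟨hc, mem_univ _⟩, rfl⟩
      · intro y hy
        apply hε
        rw [Metric.mem_ball]
        rw [Metric.mem_closedBall] at hy
        rw [dist_comm] at hdist
        calc dist y x ≤ dist y c + dist c x := dist_triangle _ _ _
          _ ≤ q + ε / 4 := by gcongr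
          _ < ε / 2 + ε / 4 := by gcongr
          _ < ε := by linarith
      · rw [Metric.mem_closedBall]
        exact le_of_lt (lt_of_lt_of_le hdist (by exact_mod_cast hq1.le))
    rw [this]
    apply MeasurableSet.sUnion ((B_cnt.mono (sep_subset _ _)))
    intro b hb
    exact MeasurableSpace.measurableSet_generateFrom (B_sub_C hb.1)
  obtain ⟨e', he'⟩ := C_cnt.exists_eq_range ⟨univ, B_sub_C (mem_insert _ _)⟩
  have cl : ∀ k, IsClosed (e' k) := fun k => C_closed _ (he' ▸ mem_range_self k)
  refine ⟨fun k n => (cl k).apprSeq n, fun μ₁ μ₂ h₁ h₂ hint => ?_⟩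
  have hC : ∀ t ∈ 𝒞, μ₁ t = μ₂ t := by
    intro t ht
    rw [he'] at ht
    obtain ⟨k, rfl⟩ := ht
    haveI := h₁; haveI := h₂
    have t1 := HasOuterApproxClosed.tendsto_lintegral_apprSeq (cl k) μ₁
    simp only [hint k] at t1
    exact tendsto_nhds_unique t1 (HasOuterApproxClosed.tendsto_lintegral_apprSeq (cl k) μ₂)
  haveI := h₁
  exact MeasureTheory.ext_of_generate_finite 𝒞 gen C_pi hC (hC univ (B_sub_C (mem_insert _ _)))



/-- The coercion `FiniteMeasure Y → Measure Y` is measurable w.r.t. the Borel σ-algebra of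
the narrow topology. -/
lemma measurable_toMeasure :
    @Measurable (FiniteMeasure Y) (Measure Y) (borel (FiniteMeasure Y)) _
      (fun μ => (μ : Measure Y)) := by
  letI : MeasurableSpace (FiniteMeasure Y) := borel (FiniteMeasure Y)
  haveI : BorelSpace (FiniteMeasure Y) := ⟨rfl⟩
  apply Measure.measurable_of_measurable_coe
  have h_eq : ‹MeasurableSpace Y› = MeasurableSpace.generateFrom {s : Set Y | IsClosed s} :=
    BorelSpace.measurable_eq.trans borel_eq_generateFrom_isClosed
  have basic : ∀ t ∈ {s : Set Y | IsClosed s},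
      Measurable (fun μ : FiniteMeasure Y => (μ : Measure Y) t) := by
    intro t ht
    have cont : ∀ n : ℕ, Continuous
        (fun μ : FiniteMeasure Y => ∫⁻ x, (ht.apprSeq n x : ℝ≥0∞) ∂(μ : Measure Y)) := by
      intro n
      have : (fun μ : FiniteMeasure Y => ∫⁻ x, (ht.apprSeq n x : ℝ≥0∞) ∂(μ : Measure Y))
          = fun μ : FiniteMeasure Y => ((μ.testAgainstNN (ht.apprSeq n) : ℝ≥0) : ℝ≥0∞) := by
        funext μ
        rw [FiniteMeasure.testAgainstNN_coe_eq]
      rw [this]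
      exact ENNReal.continuous_coe.comp (FiniteMeasure.continuous_testAgainstNN_eval _)
    apply measurable_of_tendsto_metrizable (fun n => (cont n).measurable)
    rw [tendsto_pi_nhds]
    intro μ
    exact HasOuterApproxClosed.tendsto_lintegral_apprSeq ht (μ : Measure Y)
  intro s hs
  refine MeasurableSpace.induction_on_inter
    (C := fun s _ => Measurable fun μ : FiniteMeasure Y => (μ : Measure Y) s)
    h_eq isPiSystem_isClosed ?_ basic ?_ ?_ s hs
  · simpa using measurable_const
  · intro t htm iht
    have : (fun μ : FiniteMeasure Y => (μ : Measure Y) tᶜ)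
        = fun μ : FiniteMeasure Y => (μ : Measure Y) univ - (μ : Measure Y) t := by
      funext μ
      rw [measure_compl htm (measure_ne_top _ _)]
    rw [this]
    exact (basic univ isClosed_univ).sub iht
  · intro g hd hgm ihg
    have : (fun μ : FiniteMeasure Y => (μ : Measure Y) (⋃ n, g n))
        = fun μ : FiniteMeasure Y => ∑' n, (μ : Measure Y) (g n) := by
      funext μ
      exact measure_iUnion hd hgm
    rw [this]
    exact Measurable.ennreal_tsum ihg



/-- realification of a nonneg bounded continuous function -/
def rb {X : Type*} [TopologicalSpace X] (g : X →ᵇ ℝ≥0) : X →ᵇ ℝ :=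
  BoundedContinuousFunction.comp _ (isometry_subtype_coe.lipschitz) g

@[simp] lemma rb_apply {X : Type*} [TopologicalSpace X] (g : X →ᵇ ℝ≥0) (x : X) :
    rb g x = (g x : ℝ) := rfl

lemma integral_rb {X : Type*} [TopologicalSpace X] [MeasurableSpace X] [OpensMeasurableSpace X]
    (g : X →ᵇ ℝ≥0) (μ : MeasureTheory.Measure X) :
    ∫ x, rb g x ∂μ = (∫⁻ x, (g x : ℝ≥0∞) ∂μ).toReal := by
  simp only [rb_apply]
  rw [BoundedContinuousFunction.toReal_lintegral_coe_eq_integral]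

/-- Two signed measures agreeing against a separating family of test functions are equal. -/
lemma signed_ext (g : ℕ → ℕ → (Y →ᵇ ℝ≥0))
    (hg : ∀ (μ₁ μ₂ : Measure Y), IsFiniteMeasure μ₁ → IsFiniteMeasure μ₂ →
      (∀ k n, ∫⁻ x, g k n x ∂μ₁ = ∫⁻ x, g k n x ∂μ₂) → μ₁ = μ₂)
    {ν₁ ν₂ : SignedMeasure Y}
    (h : ∀ k n, sInt ν₁ (rb (g k n)) = sInt ν₂ (rb (g k n))) : ν₁ = ν₂ := by
  set P₁ := ν₁.toJordanDecomposition.posPart with hP₁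
  set N₁ := ν₁.toJordanDecomposition.negPart with hN₁
  set P₂ := ν₂.toJordanDecomposition.posPart with hP₂
  set N₂ := ν₂.toJordanDecomposition.negPart with hN₂
  have key : P₁ + N₂ = P₂ + N₁ := by
    apply hg _ _ inferInstance inferInstance
    intro k n
    have hfin : ∀ (μ : Measure Y) [IsFiniteMeasure μ], (∫⁻ x, (g k n x : ℝ≥0∞) ∂μ) ≠ ∞ :=
      fun μ _ => (BoundedContinuousFunction.lintegral_lt_top_of_nnreal μ (g k n)).ne
    have hkn := h k n
    simp only [sInt, integral_rb, ← hP₁, ← hN₁, ← hP₂, ← hN₂] at hkn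
    rw [lintegral_add_measure, lintegral_add_measure]
    have e1 := ENNReal.toReal_add (hfin P₁) (hfin N₂)
    have e2 := ENNReal.toReal_add (hfin P₂) (hfin N₁)
    refine (ENNReal.toReal_eq_toReal_iff' (ENNReal.add_ne_top.mpr ⟨hfin _, hfin _⟩)
      (ENNReal.add_ne_top.mpr ⟨hfin _, hfin _⟩)).mp ?_
    rw [e1, e2]
    linarith
  have d₁ : ν₁ = P₁.toSignedMeasure - N₁.toSignedMeasure := by
    conv_lhs => rw [← ν₁.toSignedMeasure_toJordanDecomposition]
    rfl
  have d₂ : ν₂ = P₂.toSignedMeasure - N₂.toSignedMeasure := by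
    conv_lhs => rw [← ν₂.toSignedMeasure_toJordanDecomposition]
    rfl
  rw [d₁, d₂]
  ext i hi
  rw [Measure.toSignedMeasure_sub_apply hi, Measure.toSignedMeasure_sub_apply hi]
  have keyi : P₁ i + N₂ i = P₂ i + N₁ i := by
    have := congrArg (fun μ : Measure Y => μ i) key
    simpa [Measure.add_apply] using this
  have h1 := ENNReal.toReal_add (measure_ne_top P₁ i) (measure_ne_top N₂ i)
  have h2 := ENNReal.toReal_add (measure_ne_top P₂ i) (measure_ne_top N₁ i)
  rw [keyi, h2] at h1
  simp only [measureReal_def]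
  linarith

lemma sInt_withDensityᵥ {μ : Measure Y} [IsFiniteMeasure μ] {h : Y → ℝ} (hm : Measurable h)
    (hi : Integrable h μ) (φ : Y →ᵇ ℝ) :
    sInt (μ.withDensityᵥ h) φ = ∫ x, φ x * h x ∂μ := by
  set P := μ.withDensity (fun x => ENNReal.ofReal (h x)) with hP
  set N := μ.withDensity (fun x => ENNReal.ofReal (-h x)) with hN
  haveI hPfin : IsFiniteMeasure P := isFiniteMeasure_withDensity_ofReal hi.2
  haveI hNfin : IsFiniteMeasure N := isFiniteMeasure_withDensity_ofReal hi.neg.2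
  have hms : MeasurableSet {x : Y | h x ≤ 0} := measurableSet_le hm measurable_const
  have hPN : P ⟂ₘ N := by
    refine ⟨{x | h x ≤ 0}, hms, ?_, ?_⟩
    · rw [hP, withDensity_apply _ hms,
        setLIntegral_congr_fun hms (fun x hx => ?_), lintegral_zero]
      simp only [mem_setOf_eq] at hx
      exact ENNReal.ofReal_eq_zero.mpr hx
    · rw [hN, withDensity_apply _ hms.compl,
        setLIntegral_congr_fun hms.compl (fun x hx => ?_), lintegral_zero]
      simp only [mem_compl_iff, mem_setOf_eq, not_le] at hx
      exact ENNReal.ofReal_eq_zero.mpr (by linarith : -h x ≤ 0)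
  set J : JordanDecomposition Y := ⟨P, N, hPN⟩ with hJ
  have hJeq : μ.withDensityᵥ h = J.toSignedMeasure := by
    rw [withDensityᵥ_eq_withDensity_pos_part_sub_withDensity_neg_part hi]
    rfl
  have hJD : SignedMeasure.toJordanDecomposition (μ.withDensityᵥ h) = J := by
    rw [hJeq, JordanDecomposition.toJordanDecomposition_toSignedMeasure]
  rw [sInt, hJD]
  have hPd : P = μ.withDensity (fun x => ((Real.toNNReal (h x) : ℝ≥0) : ℝ≥0∞)) := rfl
  have hNd : N = μ.withDensity (fun x => ((Real.toNNReal (-h x) : ℝ≥0) : ℝ≥0∞)) := rfl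
  have hmP : Measurable fun x => Real.toNNReal (h x) := hm.real_toNNReal
  have hmN : Measurable fun x => Real.toNNReal (-h x) := hm.neg.real_toNNReal
  show (∫ x, φ x ∂P) - (∫ x, φ x ∂N) = _
  rw [hPd, hNd, integral_withDensity_eq_integral_smul hmP, integral_withDensity_eq_integral_smul hmN]
  simp only [NNReal.smul_def]
  have int1 : Integrable (fun x => (Real.toNNReal (h x) : ℝ) • φ x) μ := by
    have : Integrable (fun x => φ x * (Real.toNNReal (h x) : ℝ)) μ :=
      Integrable.bdd_mul (by simpa [Real.coe_toNNReal'] using hi.pos_part)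
        φ.continuous.measurable.aestronglyMeasurable (ae_of_all _ fun x => φ.norm_coe_le_norm x)
    simpa [smul_eq_mul, mul_comm] using this
  have int2 : Integrable (fun x => (Real.toNNReal (-h x) : ℝ) • φ x) μ := by
    have : Integrable (fun x => φ x * (Real.toNNReal (-h x) : ℝ)) μ :=
      Integrable.bdd_mul (by simpa [Real.coe_toNNReal'] using hi.neg.pos_part)
        φ.continuous.measurable.aestronglyMeasurable (ae_of_all _ fun x => φ.norm_coe_le_norm x)
    simpa [smul_eq_mul, mul_comm] using this
  rw [← integral_sub int1 int2]
  congr 1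
  funext x
  simp only [smul_eq_mul, Real.coe_toNNReal']
  rcases le_total (h x) 0 with hx | hx
  · rw [max_eq_right hx, max_eq_left (by linarith)]
    ring
  · rw [max_eq_left hx, max_eq_right (by linarith)]
    ring

end GDAux

/-- Let `Y` be Polish, `f : Y → ℝ^d` Borel, and `p ≥ 1`.  The set
`𝔇_f = {(μ,ν) ∈ M₊(Y) × M(Y;ℝ^d) : f ∈ L^p(μ), ν = fμ}` is a Borel subset of the product
of `M₊(Y)` (narrow topology) and `M(Y;ℝ^d)` (narrow topology), where `ν = fμ` means that
every component of `ν` is the signed measure with density the corresponding component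
of `f` with respect to `μ`. -/
theorem graph_of_density_is_borel
    {Y : Type*} [MeasurableSpace Y] [TopologicalSpace Y] [PolishSpace Y] [BorelSpace Y]
    (d : ℕ) (p : ℝ) (hp : 1 ≤ p)
    (f : Y → EuclideanSpace ℝ (Fin d)) (hf : Measurable f) :
    @MeasurableSet (FiniteMeasure Y × (Fin d → SignedMeasure Y))
      (@Prod.instMeasurableSpace _ _ (borel (FiniteMeasure Y))
        (@borel _ (narrowTopVM Y d)))
      {q : FiniteMeasure Y × (Fin d → SignedMeasure Y) |
        MemLp f (ENNReal.ofReal p) (q.1 : Measure Y) ∧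
        ∀ i : Fin d, q.2 i = (q.1 : Measure Y).withDensityᵥ (fun y => f y i)} := by
  classical
  letI mFM : MeasurableSpace (FiniteMeasure Y) := borel (FiniteMeasure Y)
  haveI : BorelSpace (FiniteMeasure Y) := ⟨rfl⟩
  letI τ : TopologicalSpace (Fin d → SignedMeasure Y) := narrowTopVM Y d
  letI mVM : MeasurableSpace (Fin d → SignedMeasure Y) := @borel _ τ
  haveI hBVM : @BorelSpace _ τ mVM := @BorelSpace.mk _ τ mVM rfl
  -- coordinate functions of f
  have hmf : ∀ i : Fin d, Measurable (fun y => f y i) := by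
    intro i
    have : (fun y => f y i) = fun y => (EuclideanSpace.proj (𝕜 := ℝ) i) (f y) := by
      funext y; simp
    rw [this]
    exact ((EuclideanSpace.proj (𝕜 := ℝ) i).continuous.measurable).comp hf
  -- MemLp is equivalent to finiteness of a lintegral
  have hq0 : (ENNReal.ofReal p) ≠ 0 := by
    simp only [ne_eq, ENNReal.ofReal_eq_zero, not_le]; linarith
  have hqt : (ENNReal.ofReal p) ≠ ∞ := ENNReal.ofReal_ne_top
  have htoReal : (ENNReal.ofReal p).toReal = p := ENNReal.toReal_ofReal (by linarith)
  have hmem : ∀ μ : Measure Y,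
      MemLp f (ENNReal.ofReal p) μ ↔ (∫⁻ y, (‖f y‖₊ : ℝ≥0∞) ^ p ∂μ) < ∞ := by
    intro μ
    constructor
    · intro hμ
      have := (eLpNorm_lt_top_iff_lintegral_rpow_enorm_lt_top hq0 hqt).mp hμ.2
      rwa [htoReal] at this
    · intro hμ
      exact ⟨hf.aestronglyMeasurable,
        (eLpNorm_lt_top_iff_lintegral_rpow_enorm_lt_top hq0 hqt).mpr (by rwa [htoReal])⟩
  -- the measurable "mass" functional for the Lᵖ condition
  set L : FiniteMeasure Y → ℝ≥0∞ :=
    fun μ => ∫⁻ y, (‖f y‖₊ : ℝ≥0∞) ^ p ∂(μ : Measure Y) with hL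
  have hLmeas : Measurable L := by
    apply (Measure.measurable_lintegral ?_).comp GDAux.measurable_toMeasure
    exact hf.enorm.pow_const p
  -- separating family
  obtain ⟨g, hg⟩ := GDAux.exists_separating (Y := Y)
  set φ : ℕ → ℕ → (Y →ᵇ ℝ) := fun k n => GDAux.rb (g k n) with hφ
  -- measurable version of the integral of φ · fᵢ
  set G : Fin d → ℕ → ℕ → FiniteMeasure Y → ℝ := fun i k n μ =>
    (∫⁻ x, ENNReal.ofReal (φ k n x * f x i) ∂(μ : Measure Y)).toReal -
    (∫⁻ x, ENNReal.ofReal (-(φ k n x * f x i)) ∂(μ : Measure Y)).toReal with hG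
  have hGmeas : ∀ i k n, Measurable (G i k n) := by
    intro i k n
    have h1 : Measurable fun x => φ k n x * f x i :=
      ((φ k n).continuous.measurable).mul (hmf i)
    apply Measurable.sub
    · exact ENNReal.measurable_toReal.comp
        ((Measure.measurable_lintegral (ENNReal.measurable_ofReal.comp h1)).comp
          GDAux.measurable_toMeasure)
    · exact ENNReal.measurable_toReal.comp
        ((Measure.measurable_lintegral (ENNReal.measurable_ofReal.comp h1.neg)).comp
          GDAux.measurable_toMeasure)
  -- integrability of the coordinates and of φ · fᵢ on the Lᵖ set
  have hint : ∀ (μ : FiniteMeasure Y), MemLp f (ENNReal.ofReal p) (μ : Measure Y) →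
      ∀ i : Fin d, Integrable (fun y => f y i) (μ : Measure Y) := by
    intro μ hμ i
    have h1 : Integrable f (μ : Measure Y) := hμ.integrable (ENNReal.one_le_ofReal.mpr hp)
    have h2 := (EuclideanSpace.proj (𝕜 := ℝ) i).integrable_comp h1
    have : (fun y => (EuclideanSpace.proj (𝕜 := ℝ) i) (f y)) = fun y => f y i := by
      funext y; simp
    rwa [this] at h2
  have hint2 : ∀ (μ : FiniteMeasure Y), MemLp f (ENNReal.ofReal p) (μ : Measure Y) →
      ∀ i k n, Integrable (fun x => φ k n x * f x i) (μ : Measure Y) := by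
    intro μ hμ i k n
    exact Integrable.bdd_mul (hint μ hμ i)
      (φ k n).continuous.measurable.aestronglyMeasurable
      (ae_of_all _ fun x => (φ k n).norm_coe_le_norm x)
  -- G equals the actual integral on the Lᵖ set
  have hGeq : ∀ (μ : FiniteMeasure Y), MemLp f (ENNReal.ofReal p) (μ : Measure Y) →
      ∀ i k n, G i k n μ = ∫ x, φ k n x * f x i ∂(μ : Measure Y) := by
    intro μ hμ i k n
    exact (integral_eq_lintegral_pos_part_sub_lintegral_neg_part (hint2 μ hμ i k n)).symm
  -- the set equality
  have hset : {q : FiniteMeasure Y × (Fin d → SignedMeasure Y) |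
        MemLp f (ENNReal.ofReal p) (q.1 : Measure Y) ∧
        ∀ i : Fin d, q.2 i = (q.1 : Measure Y).withDensityᵥ (fun y => f y i)}
      = {q : FiniteMeasure Y × (Fin d → SignedMeasure Y) | L q.1 < ∞} ∩
        ⋂ (i : Fin d), ⋂ (k : ℕ), ⋂ (n : ℕ),
          {q : FiniteMeasure Y × (Fin d → SignedMeasure Y) |
            sInt (q.2 i) (φ k n) = G i k n q.1} := by
    ext q
    simp only [Set.mem_setOf_eq, Set.mem_inter_iff, Set.mem_iInter]
    constructor
    · rintro ⟨h1, h2⟩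
      refine ⟨(hmem _).mp h1, fun i k n => ?_⟩
      rw [h2 i, GDAux.sInt_withDensityᵥ (hmf i) (hint q.1 h1 i) (φ k n),
        hGeq q.1 h1 i k n]
    · rintro ⟨h1, h2⟩
      have hq1 : MemLp f (ENNReal.ofReal p) (q.1 : Measure Y) := (hmem _).mpr h1
      refine ⟨hq1, fun i => ?_⟩
      apply GDAux.signed_ext g hg
      intro k n
      rw [GDAux.sInt_withDensityᵥ (hmf i) (hint q.1 hq1 i) (φ k n), ← hGeq q.1 hq1 i k n]
      exact h2 i k n
  rw [hset]
  have hA : MeasurableSet {q : FiniteMeasure Y × (Fin d → SignedMeasure Y) | L q.1 < ∞} :=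
    measurableSet_lt (hLmeas.comp measurable_fst) measurable_const
  refine hA.inter (MeasurableSet.iInter fun i => MeasurableSet.iInter fun k =>
    MeasurableSet.iInter fun n => ?_)
  have hsInt : Measurable fun q : FiniteMeasure Y × (Fin d → SignedMeasure Y) =>
      sInt (q.2 i) (φ k n) := by
    have hc1 : @Continuous _ _ τ _ (fun ν : Fin d → SignedMeasure Y => sInt (ν i) (φ k n)) := by
      have e1 : @Continuous _ _ τ (narrowTopSM Y) (fun ν : Fin d → SignedMeasure Y => ν i) :=
        @continuous_apply (Fin d) (fun _ => SignedMeasure Y) (fun _ => narrowTopSM Y) i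
      have e2 : @Continuous _ _ (narrowTopSM Y) _ (fun ν : SignedMeasure Y => sInt ν (φ k n)) := by
        have e3 : @Continuous _ _ (narrowTopSM Y) _
            (fun ν : SignedMeasure Y => (fun ψ : Y →ᵇ ℝ => sInt ν ψ)) :=
          @continuous_induced_dom _ _ _ _
        exact @Continuous.comp (SignedMeasure Y) ((Y →ᵇ ℝ) → ℝ) ℝ (narrowTopSM Y) _ _
          _ _ (continuous_apply (φ k n)) e3
      exact @Continuous.comp (Fin d → SignedMeasure Y) (SignedMeasure Y) ℝ τ (narrowTopSM Y) _
        _ _ e2 e1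
    exact (@Continuous.measurable _ _ τ mVM _ _ _ _ _ hc1).comp measurable_snd
  exact measurableSet_eq_fun hsInt ((hGmeas i k n).comp measurable_fst)

end
end

section
/- Let Y be a Polish space. The set {(μ,ν) ∈ M₊(Y) × M₊(Y) : ν ≪ μ} of absolutely continuous pairs is a Borel subset of M₊(Y) × M₊(Y) with the narrow topologies. The same holds for {(μ,ν) ∈ M₊(Y) × M(Y;ℝ^d) : ν ≪ μ}, where ν ≪ μ means |ν| ≪ μ. -/
open MeasureTheory ENNReal BoundedContinuousFunction

noncomputable section

/-- Absolute continuity of an `ℝ^d`-valued measure w.r.t. a positive measure: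
`ν ≪ μ` (equivalently `|ν| ≪ μ`) holds iff every null set of `μ` is a null set of each
component of `ν`. -/
def vmAC {Y : Type*} [MeasurableSpace Y] {d : ℕ}
    (ν : Fin d → SignedMeasure Y) (μ : Measure Y) : Prop :=
  ∀ i : Fin d, (ν i) ≪ᵥ μ.toENNRealVectorMeasure

section ACAux
open Filter Set Topology
open scoped NNReal

/-- Coercion of a nonnegative bounded continuous function to a real-valued one. -/
def nnBCFtoReal {X : Type*} [TopologicalSpace X] (f : X →ᵇ ℝ≥0) : X →ᵇ ℝ :=
  BoundedContinuousFunction.comp ((↑) : ℝ≥0 → ℝ)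
    ((show Isometry ((↑) : ℝ≥0 → ℝ) from fun _ _ => rfl).lipschitz) f

@[simp] lemma nnBCFtoReal_apply {X : Type*} [TopologicalSpace X] (f : X →ᵇ ℝ≥0) (x : X) :
    nnBCFtoReal f x = (f x : ℝ) := rfl

lemma signedMeasure_apply_eq {X : Type*} [MeasurableSpace X] (ν : SignedMeasure X)
    {s : Set X} (hs : MeasurableSet s) :
    ν s = (ν.toJordanDecomposition.posPart s).toReal
        - (ν.toJordanDecomposition.negPart s).toReal := by
  conv_lhs => rw [← ν.toSignedMeasure_toJordanDecomposition]
  rw [JordanDecomposition.toSignedMeasure, Measure.toSignedMeasure_sub_apply hs]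
  rfl

/-- The `ε`-`δ` characterization of absolute continuity (one direction), for a finite
measure `ρ` absolutely continuous w.r.t. `μ`. -/
lemma acEpsDel {Y : Type*} [MeasurableSpace Y] {μ ρ : Measure Y} [IsFiniteMeasure ρ]
    (h : ρ ≪ μ) {ε : ℝ≥0∞} (hε : ε ≠ 0) :
    ∃ δ : ℝ≥0∞, δ ≠ 0 ∧ ∀ s : Set Y, MeasurableSet s → μ s ≤ δ → ρ s ≤ ε := by
  by_contra hc
  push_neg at hc
  have key : ∀ k : ℕ, ∃ s : Set Y, MeasurableSet s ∧ μ s ≤ (2 : ℝ≥0∞)⁻¹ ^ k ∧ ε < ρ s := by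
    intro k
    obtain ⟨s, hs, hμ, hρ⟩ := hc ((2 : ℝ≥0∞)⁻¹ ^ k)
      (pow_ne_zero k (by simp))
    exact ⟨s, hs, hμ, hρ⟩
  choose s hsm hsμ hsρ using key
  have htsum : (∑' k, μ (s k)) ≠ ∞ := by
    have h1 : (∑' k, μ (s k)) ≤ ∑' k, (2 : ℝ≥0∞)⁻¹ ^ k := ENNReal.tsum_le_tsum hsμ
    have h2 : (∑' k : ℕ, (2 : ℝ≥0∞)⁻¹ ^ k) = 2 := by
      rw [ENNReal.tsum_geometric, ENNReal.one_sub_inv_two, inv_inv]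
    exact ne_top_of_le_ne_top (by rw [h2]; exact ENNReal.ofNat_ne_top) h1
  have hμ0 : μ (limsup s atTop) = 0 := measure_limsup_atTop_eq_zero htsum
  have hρ0 : ρ (limsup s atTop) = 0 := h hμ0
  -- but `ρ (limsup s) ≥ ε > 0`
  have hls : limsup s atTop = ⋂ n : ℕ, ⋃ k, ⋃ (_ : n ≤ k), s k := by
    rw [limsup_eq_iInf_iSup_of_nat]
    simp only [iSup_eq_iUnion, iInf_eq_iInter]
  have hT : ∀ n : ℕ, ε ≤ ρ (⋃ k, ⋃ (_ : n ≤ k), s k) := by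
    intro n
    exact le_trans (hsρ n).le (measure_mono (Set.subset_iUnion₂ (s := fun k (_ : n ≤ k) => s k) n le_rfl))
  have htend : Tendsto (fun n => ρ (⋃ k, ⋃ (_ : n ≤ k), s k)) atTop
      (𝓝 (ρ (⋂ n : ℕ, ⋃ k, ⋃ (_ : n ≤ k), s k))) := by
    refine tendsto_measure_iInter_atTop (fun n => ?_) (fun a b hab => ?_) ⟨0, measure_ne_top _ _⟩
    · exact (MeasurableSet.biUnion (to_countable _) fun k _ => hsm k).nullMeasurableSet
    · exact biUnion_subset_biUnion_left fun k hk => le_trans hab hk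
  have hfin : ε ≤ ρ (limsup s atTop) := by
    rw [hls]
    exact ge_of_tendsto htend (Eventually.of_forall hT)
  rw [hρ0] at hfin
  exact hε (le_zero_iff.mp hfin)

end ACAux

open Filter Set Topology TopologicalSpace
open scoped NNReal

/-- Let `Y` be Polish.  The set of absolutely continuous pairs
`{(μ,ν) ∈ M₊(Y) × M₊(Y) : ν ≪ μ}` is Borel for the product of the narrow topologies, and
likewise `{(μ,ν) ∈ M₊(Y) × M(Y;ℝ^d) : ν ≪ μ}` (where `ν ≪ μ` means `|ν| ≪ μ`). -/
theorem absolutely_continuous_pairs_borel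
    {Y : Type*} [MeasurableSpace Y] [TopologicalSpace Y] [PolishSpace Y] [BorelSpace Y]
    (d : ℕ) :
    (@MeasurableSet (FiniteMeasure Y × FiniteMeasure Y)
      (@Prod.instMeasurableSpace _ _ (borel (FiniteMeasure Y)) (borel (FiniteMeasure Y)))
      {q : FiniteMeasure Y × FiniteMeasure Y |
        (q.2 : Measure Y) ≪ (q.1 : Measure Y)}) ∧
    (@MeasurableSet (FiniteMeasure Y × (Fin d → SignedMeasure Y))
      (@Prod.instMeasurableSpace _ _ (borel (FiniteMeasure Y))
        (@borel _ (narrowTopVM Y d)))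
      {q : FiniteMeasure Y × (Fin d → SignedMeasure Y) |
        vmAC q.2 (q.1 : Measure Y)}) := by
  classical
  letI := upgradeIsCompletelyMetrizable Y
  letI mFM : MeasurableSpace (FiniteMeasure Y) := borel _
  haveI : BorelSpace (FiniteMeasure Y) := ⟨rfl⟩
  letI tSM : TopologicalSpace (SignedMeasure Y) := narrowTopSM Y
  letI mSM : MeasurableSpace (SignedMeasure Y) := borel _
  haveI : BorelSpace (SignedMeasure Y) := ⟨rfl⟩
  letI tVM : TopologicalSpace (Fin d → SignedMeasure Y) := narrowTopVM Y d
  letI mVM : MeasurableSpace (Fin d → SignedMeasure Y) := @borel _ (narrowTopVM Y d)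
  haveI : @BorelSpace _ tVM mVM := ⟨rfl⟩
  -- measurability of evaluation on closed sets, finite measures
  have measFMclosed : ∀ F : Set Y, IsClosed F →
      Measurable fun μ : FiniteMeasure Y => (μ : Measure Y) F := by
    intro F hF
    have key : ∀ μ : FiniteMeasure Y,
        Tendsto (fun n => (μ.testAgainstNN (hF.apprSeq n) : ℝ≥0∞)) atTop
          (𝓝 ((μ : Measure Y) F)) := by
      intro μ
      simpa only [FiniteMeasure.testAgainstNN_coe_eq] using
        HasOuterApproxClosed.tendsto_lintegral_apprSeq hF (μ : Measure Y)
    have hrw : (fun μ : FiniteMeasure Y => (μ : Measure Y) F)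
        = fun μ => Filter.liminf
            (fun n => (μ.testAgainstNN (hF.apprSeq n) : ℝ≥0∞)) Filter.atTop :=
      funext fun μ => ((key μ).liminf_eq).symm
    rw [hrw]
    exact Measurable.liminf fun n =>
      (ENNReal.continuous_coe.comp
        (FiniteMeasure.continuous_testAgainstNN_eval (hF.apprSeq n))).measurable
  have measFMopen : ∀ U : Set Y, IsOpen U →
      Measurable fun μ : FiniteMeasure Y => (μ : Measure Y) U := by
    intro U hU
    have hrw : (fun μ : FiniteMeasure Y => (μ : Measure Y) U)
        = fun μ : FiniteMeasure Y => (μ : Measure Y) Set.univ - (μ : Measure Y) Uᶜ := by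
      funext μ
      conv_lhs => rw [← compl_compl U]
      rw [measure_compl hU.measurableSet.compl (measure_ne_top _ _)]
    rw [hrw]
    exact (measFMclosed _ isClosed_univ).sub (measFMclosed _ (isClosed_compl_iff.mpr hU))
  -- continuity of pairing for signed measures
  have contSInt : ∀ φ : Y →ᵇ ℝ, Continuous fun ν : SignedMeasure Y => sInt ν φ := by
    intro φ
    have h1 : Continuous fun ν : SignedMeasure Y => (fun ψ : Y →ᵇ ℝ => sInt ν ψ) :=
      continuous_induced_dom
    exact (continuous_apply φ).comp h1
  -- evaluation on closed sets, signed measures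
  have keySM : ∀ (F : Set Y) (hF : IsClosed F) (ν : SignedMeasure Y),
      Tendsto (fun n => sInt ν (nnBCFtoReal (hF.apprSeq n))) atTop (𝓝 (ν F)) := by
    intro F hF ν
    have hint : ∀ ρ : Measure Y, IsFiniteMeasure ρ →
        Tendsto (fun n => ∫ x, ((hF.apprSeq n x : ℝ≥0) : ℝ) ∂ρ) atTop
          (𝓝 ((ρ F).toReal)) := by
      intro ρ hρfin
      have h1 : Tendsto (fun n => ∫ x, ((hF.apprSeq n x : ℝ≥0) : ℝ) ∂ρ) atTop
          (𝓝 (∫ x, F.indicator (1 : Y → ℝ) x ∂ρ)) := by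
        refine tendsto_integral_of_dominated_convergence (fun _ => (1 : ℝ))
          (fun n => (NNReal.continuous_coe.comp
            (hF.apprSeq n).continuous).aestronglyMeasurable)
          (integrable_const 1) (fun n => Eventually.of_forall fun x => ?_)
          (Eventually.of_forall fun x => ?_)
        · rw [Real.norm_of_nonneg (NNReal.coe_nonneg _)]
          exact_mod_cast HasOuterApproxClosed.apprSeq_apply_le_one hF n x
        · have hx := tendsto_pi_nhds.mp (HasOuterApproxClosed.tendsto_apprSeq hF) x
          have := (NNReal.continuous_coe.tendsto _).comp hx
          convert this using 2
          all_goals by_cases hxF : x ∈ F <;> simp [hxF, Set.indicator_apply]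
      rwa [integral_indicator_one hF.measurableSet] at h1
    have hp := hint ν.toJordanDecomposition.posPart inferInstance
    have hq := hint ν.toJordanDecomposition.negPart inferInstance
    have := hp.sub hq
    rw [← signedMeasure_apply_eq ν hF.measurableSet] at this
    convert this using 2
    rfl
  have measSMclosed : ∀ F : Set Y, IsClosed F →
      Measurable fun ν : SignedMeasure Y => ν F := by
    intro F hF
    exact measurable_of_tendsto_metrizable
      (fun n => (contSInt (nnBCFtoReal (hF.apprSeq n))).measurable)
      (tendsto_pi_nhds.mpr (keySM F hF))
  have measSMopen : ∀ U : Set Y, IsOpen U →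
      Measurable fun ν : SignedMeasure Y => ν U := by
    intro U hU
    have hrw : (fun ν : SignedMeasure Y => ν U)
        = fun ν => ν Set.univ - ν Uᶜ := by
      funext ν
      have h := VectorMeasure.of_union (disjoint_compl_right (a := U))
        hU.measurableSet hU.measurableSet.compl (v := ν)
      rw [Set.union_compl_self] at h
      linarith
    rw [hrw]
    exact (measSMclosed _ isClosed_univ).sub (measSMclosed _ (isClosed_compl_iff.mpr hU))
  -- a countable family of basic open sets
  obtain ⟨b, hb⟩ : ∃ b : ℕ → Set Y, insert ∅ (countableBasis Y) = Set.range b :=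
    ((countable_countableBasis Y).insert ∅).exists_eq_range ⟨∅, Set.mem_insert _ _⟩
  have hbopen : ∀ n, IsOpen (b n) := by
    intro n
    have hmem : b n ∈ insert ∅ (countableBasis Y) := by
      rw [hb]; exact Set.mem_range_self n
    rcases Set.mem_insert_iff.mp hmem with h | h
    · rw [h]; exact isOpen_empty
    · exact isOpen_of_mem_countableBasis h
  have hbbasis : ∀ V : Set Y, IsOpen V → ∀ x ∈ V, ∃ n, x ∈ b n ∧ b n ⊆ V := by
    intro V hV x hx
    obtain ⟨u, huB, hxu, huV⟩ :=
      (isBasis_countableBasis Y).exists_subset_of_mem_open hx hV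
    have : u ∈ Set.range b := by rw [← hb]; exact Set.mem_insert_of_mem _ huB
    obtain ⟨n, rfl⟩ := this
    exact ⟨n, hxu, huV⟩
  set W : Finset ℕ → Set Y := fun t => ⋃ i ∈ t, b i with hWdef
  have hWopen : ∀ t, IsOpen (W t) := fun t => isOpen_biUnion fun i _ => hbopen i
  -- exhaustion of an open set by the `W t`
  have hexh : ∀ V : Set Y, IsOpen V → ∃ u : ℕ → Finset ℕ,
      Monotone (fun k => W (u k)) ∧ (⋃ k, W (u k)) = V ∧ ∀ k, W (u k) ⊆ V := by
    intro V hV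
    refine ⟨fun k => (Finset.range k).filter (fun i => b i ⊆ V), ?_, ?_, ?_⟩
    · intro a c hac
      refine Set.biUnion_subset_biUnion_left ?_
      intro i hi
      obtain ⟨h1, h2⟩ := Finset.mem_filter.mp hi
      exact Finset.mem_filter.mpr ⟨Finset.mem_range.mpr
        (lt_of_lt_of_le (Finset.mem_range.mp h1) hac), h2⟩
    · apply subset_antisymm
      · refine Set.iUnion_subset fun k => Set.iUnion₂_subset fun i hi => ?_
        exact (Finset.mem_filter.mp hi).2
      · intro x hx
        obtain ⟨n, hxn, hnV⟩ := hbbasis V hV x hx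
        refine Set.mem_iUnion.mpr ⟨n + 1, ?_⟩
        exact Set.mem_biUnion
          (Finset.mem_filter.mpr ⟨Finset.mem_range.mpr (Nat.lt_succ_self n), hnV⟩) hxn
    · intro k
      refine Set.iUnion₂_subset fun i hi => ?_
      exact (Finset.mem_filter.mp hi).2
  -- characterization, part 1
  have key1 : ∀ μ ν : FiniteMeasure Y,
      ((ν : Measure Y) ≪ (μ : Measure Y)) ↔
      ∀ n : ℕ, ∃ m : ℕ, ∀ t : Finset ℕ,
        (μ : Measure Y) (W t) ≤ ((m : ℝ≥0∞) + 1)⁻¹ →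
          (ν : Measure Y) (W t) ≤ ((n : ℝ≥0∞) + 1)⁻¹ := by
    intro μ ν
    constructor
    · intro h n
      obtain ⟨δ, hδ0, hδ⟩ := acEpsDel h (ε := ((n : ℝ≥0∞) + 1)⁻¹)
        (ENNReal.inv_ne_zero.mpr (by simp))
      obtain ⟨m, hm⟩ := ENNReal.exists_inv_nat_lt hδ0
      refine ⟨m, fun t ht => hδ _ (hWopen t).measurableSet (ht.trans ?_)⟩
      have h1 : ((m : ℝ≥0∞) + 1)⁻¹ ≤ ((m : ℝ≥0∞))⁻¹ :=
        ENNReal.inv_le_inv' le_self_add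
      exact h1.trans hm.le
    · intro h
      refine Measure.AbsolutelyContinuous.mk fun s hs hμs => ?_
      by_contra hνs
      obtain ⟨n, hn⟩ := ENNReal.exists_inv_nat_lt hνs
      obtain ⟨m, hm⟩ := h n
      obtain ⟨V, hsV, hVopen, hVlt⟩ := Set.exists_isOpen_lt_of_lt s ((m : ℝ≥0∞) + 1)⁻¹
        (by rw [hμs]; exact ENNReal.inv_pos.mpr (by simp))
      obtain ⟨u, hmono, hunion, hsub⟩ := hexh V hVopen
      have hνV : (ν : Measure Y) V ≤ ((n : ℝ≥0∞) + 1)⁻¹ := by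
        rw [← hunion, Directed.measure_iUnion hmono.directed_le]
        exact iSup_le fun k => hm _ ((measure_mono (hsub k)).trans hVlt.le)
      have hνs' : (ν : Measure Y) s ≤ ((n : ℝ≥0∞) + 1)⁻¹ := (measure_mono hsV).trans hνV
      have h1 : ((n : ℝ≥0∞) + 1)⁻¹ ≤ ((n : ℝ≥0∞))⁻¹ := ENNReal.inv_le_inv' le_self_add
      exact absurd (hνs'.trans h1) (not_le.mpr hn)
  -- characterization, part 2
  have key2 : ∀ (μ : FiniteMeasure Y) (σ : SignedMeasure Y),
      (σ ≪ᵥ (μ : Measure Y).toENNRealVectorMeasure) ↔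
      ∀ n : ℕ, ∃ m : ℕ, ∀ t : Finset ℕ,
        (μ : Measure Y) (W t) ≤ ((m : ℝ≥0∞) + 1)⁻¹ →
          |σ (W t)| ≤ ((n : ℝ) + 1)⁻¹ := by
    intro μ σ
    set p := σ.toJordanDecomposition.posPart with hpdef
    set q := σ.toJordanDecomposition.negPart with hqdef
    constructor
    · intro h n
      have htv : σ.totalVariation ≪ (μ : Measure Y) := by
        have := (SignedMeasure.absolutelyContinuous_ennreal_iff σ _).mp h
        rwa [VectorMeasure.ennrealToMeasure_toENNRealVectorMeasure] at this
      obtain ⟨hpac, hqac⟩ :=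
        (SignedMeasure.totalVariation_absolutelyContinuous_iff σ (μ : Measure Y)).mp htv
      have hεpos : (0 : ℝ) < ((n : ℝ) + 1)⁻¹ / 2 := by positivity
      obtain ⟨δ₁, hδ₁0, hδ₁⟩ := acEpsDel hpac
        (ε := ENNReal.ofReal (((n : ℝ) + 1)⁻¹ / 2)) (ne_of_gt (ENNReal.ofReal_pos.mpr hεpos))
      obtain ⟨δ₂, hδ₂0, hδ₂⟩ := acEpsDel hqac
        (ε := ENNReal.ofReal (((n : ℝ) + 1)⁻¹ / 2)) (ne_of_gt (ENNReal.ofReal_pos.mpr hεpos))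
      obtain ⟨m, hm⟩ := ENNReal.exists_inv_nat_lt
        (show min δ₁ δ₂ ≠ 0 by
          rcases min_cases δ₁ δ₂ with ⟨hmin, _⟩ | ⟨hmin, _⟩ <;> rw [hmin] <;> assumption)
      refine ⟨m, fun t ht => ?_⟩
      have hsmall : (μ : Measure Y) (W t) ≤ min δ₁ δ₂ := by
        refine ht.trans (le_trans (ENNReal.inv_le_inv' le_self_add) hm.le)
      have hp1 : p (W t) ≤ ENNReal.ofReal (((n : ℝ) + 1)⁻¹ / 2) :=
        hδ₁ _ (hWopen t).measurableSet (hsmall.trans (min_le_left _ _))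
      have hq1 : q (W t) ≤ ENNReal.ofReal (((n : ℝ) + 1)⁻¹ / 2) :=
        hδ₂ _ (hWopen t).measurableSet (hsmall.trans (min_le_right _ _))
      have hp2 : (p (W t)).toReal ≤ ((n : ℝ) + 1)⁻¹ / 2 :=
        ENNReal.toReal_le_of_le_ofReal hεpos.le hp1
      have hq2 : (q (W t)).toReal ≤ ((n : ℝ) + 1)⁻¹ / 2 :=
        ENNReal.toReal_le_of_le_ofReal hεpos.le hq1
      rw [signedMeasure_apply_eq σ (hWopen t).measurableSet]
      rw [abs_le]
      constructor
      · have := ENNReal.toReal_nonneg (a := p (W t))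
        linarith
      · have := ENNReal.toReal_nonneg (a := q (W t))
        linarith
    · intro h
      refine VectorMeasure.AbsolutelyContinuous.mk fun s hs hμs => ?_
      rw [Measure.toENNRealVectorMeasure_apply_measurable hs] at hμs
      have key : ∀ n : ℕ, |σ s| ≤ 3 * ((n : ℝ) + 1)⁻¹ := by
        intro n
        obtain ⟨m, hm⟩ := h n
        have hηpos : (0 : ℝ) < ((n : ℝ) + 1)⁻¹ := by positivity
        set η : ℝ≥0∞ := ENNReal.ofReal ((n : ℝ) + 1)⁻¹ with hηdef
        have hη0 : η ≠ 0 := ne_of_gt (ENNReal.ofReal_pos.mpr hηpos)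
        obtain ⟨V₁, hsV₁, hV₁o, hV₁⟩ := Set.exists_isOpen_lt_of_lt s ((m : ℝ≥0∞) + 1)⁻¹
          (by rw [hμs]; exact ENNReal.inv_pos.mpr (by simp))
        obtain ⟨V₂, hsV₂, hV₂o, hV₂⟩ :=
          Set.exists_isOpen_lt_add (μ := p) s (measure_ne_top p s) hη0
        obtain ⟨V₃, hsV₃, hV₃o, hV₃⟩ :=
          Set.exists_isOpen_lt_add (μ := q) s (measure_ne_top q s) hη0
        set V := V₁ ∩ (V₂ ∩ V₃) with hVdef
        have hVo : IsOpen V := hV₁o.inter (hV₂o.inter hV₃o)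
        have hsV : s ⊆ V := Set.subset_inter hsV₁ (Set.subset_inter hsV₂ hsV₃)
        have hμV : (μ : Measure Y) V ≤ ((m : ℝ≥0∞) + 1)⁻¹ :=
          le_of_lt (lt_of_le_of_lt (measure_mono Set.inter_subset_left) hV₁)
        have hpV : p V ≤ p s + η :=
          le_of_lt (lt_of_le_of_lt
            (measure_mono (Set.inter_subset_right.trans Set.inter_subset_left)) hV₂)
        have hqV : q V ≤ q s + η :=
          le_of_lt (lt_of_le_of_lt
            (measure_mono (Set.inter_subset_right.trans Set.inter_subset_right)) hV₃)
        obtain ⟨u, hmono, hunion, hsub⟩ := hexh V hVo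
        have hptend : Tendsto (fun k => p (W (u k))) atTop (𝓝 (p V)) := by
          have := tendsto_measure_iUnion_atTop (μ := p) hmono
          rwa [hunion] at this
        have hqtend : Tendsto (fun k => q (W (u k))) atTop (𝓝 (q V)) := by
          have := tendsto_measure_iUnion_atTop (μ := q) hmono
          rwa [hunion] at this
        have hσtend : Tendsto (fun k => σ (W (u k))) atTop (𝓝 (σ V)) := by
          have hp' := (ENNReal.tendsto_toReal (measure_ne_top p V)).comp hptend
          have hq' := (ENNReal.tendsto_toReal (measure_ne_top q V)).comp hqtend
          have := hp'.sub hq'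
          rw [← signedMeasure_apply_eq σ hVo.measurableSet] at this
          refine this.congr fun k => ?_
          exact (signedMeasure_apply_eq σ (hWopen _).measurableSet).symm
        have habsV : |σ V| ≤ ((n : ℝ) + 1)⁻¹ := by
          refine le_of_tendsto hσtend.abs (Eventually.of_forall fun k => ?_)
          exact hm _ ((measure_mono (hsub k)).trans hμV)
        -- compare `σ s` with `σ V`
        have hps : p s ≤ p V := measure_mono hsV
        have hqs : q s ≤ q V := measure_mono hsV
        have hη : η ≠ ∞ := ENNReal.ofReal_ne_top
        have hp3 : (p V).toReal ≤ (p s).toReal + ((n : ℝ) + 1)⁻¹ := by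
          have h1 : (p V).toReal ≤ (p s + η).toReal :=
            ENNReal.toReal_mono (ENNReal.add_ne_top.mpr ⟨measure_ne_top _ _, hη⟩) hpV
          rwa [ENNReal.toReal_add (measure_ne_top _ _) hη, hηdef,
            ENNReal.toReal_ofReal hηpos.le] at h1
        have hq3 : (q V).toReal ≤ (q s).toReal + ((n : ℝ) + 1)⁻¹ := by
          have h1 : (q V).toReal ≤ (q s + η).toReal :=
            ENNReal.toReal_mono (ENNReal.add_ne_top.mpr ⟨measure_ne_top _ _, hη⟩) hqV
          rwa [ENNReal.toReal_add (measure_ne_top _ _) hη, hηdef,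
            ENNReal.toReal_ofReal hηpos.le] at h1
        have hp4 : (p s).toReal ≤ (p V).toReal := ENNReal.toReal_mono (measure_ne_top _ _) hps
        have hq4 : (q s).toReal ≤ (q V).toReal := ENNReal.toReal_mono (measure_ne_top _ _) hqs
        have hσs := signedMeasure_apply_eq σ hs
        have hσV := signedMeasure_apply_eq σ hVo.measurableSet
        rw [abs_le] at habsV ⊢
        rw [hσV] at habsV
        rw [hσs]
        constructor <;> [linarith [habsV.1]; linarith [habsV.2]]
      have h0 : Tendsto (fun n : ℕ => 3 * ((n : ℝ) + 1)⁻¹) atTop (𝓝 0) := by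
        have := (tendsto_one_div_add_atTop_nhds_zero_nat (𝕜 := ℝ)).const_mul 3
        simpa [one_div, mul_zero] using this
      have habs : |σ s| ≤ 0 := ge_of_tendsto h0 (Eventually.of_forall key)
      exact abs_nonpos_iff.mp habs
  -- assembling the measurable sets
  constructor
  · have hset : {q : FiniteMeasure Y × FiniteMeasure Y |
        (q.2 : Measure Y) ≪ (q.1 : Measure Y)} =
        ⋂ n : ℕ, ⋃ m : ℕ, ⋂ t : Finset ℕ,
          {q : FiniteMeasure Y × FiniteMeasure Y |
            (q.1 : Measure Y) (W t) ≤ ((m : ℝ≥0∞) + 1)⁻¹ →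
              (q.2 : Measure Y) (W t) ≤ ((n : ℝ≥0∞) + 1)⁻¹} := by
      ext q
      simp only [Set.mem_setOf_eq, Set.mem_iInter, Set.mem_iUnion]
      exact key1 q.1 q.2
    rw [hset]
    refine MeasurableSet.iInter fun n => MeasurableSet.iUnion fun m =>
      MeasurableSet.iInter fun t => ?_
    have hA : MeasurableSet {q : FiniteMeasure Y × FiniteMeasure Y |
        (q.1 : Measure Y) (W t) ≤ ((m : ℝ≥0∞) + 1)⁻¹} :=
      measurableSet_le ((measFMopen _ (hWopen t)).comp measurable_fst) measurable_const
    have hB : MeasurableSet {q : FiniteMeasure Y × FiniteMeasure Y |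
        (q.2 : Measure Y) (W t) ≤ ((n : ℝ≥0∞) + 1)⁻¹} :=
      measurableSet_le ((measFMopen _ (hWopen t)).comp measurable_snd) measurable_const
    have : {q : FiniteMeasure Y × FiniteMeasure Y |
        (q.1 : Measure Y) (W t) ≤ ((m : ℝ≥0∞) + 1)⁻¹ →
          (q.2 : Measure Y) (W t) ≤ ((n : ℝ≥0∞) + 1)⁻¹} =
        {q : FiniteMeasure Y × FiniteMeasure Y |
          (q.1 : Measure Y) (W t) ≤ ((m : ℝ≥0∞) + 1)⁻¹}ᶜ ∪
        {q : FiniteMeasure Y × FiniteMeasure Y |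
          (q.2 : Measure Y) (W t) ≤ ((n : ℝ≥0∞) + 1)⁻¹} := by
      ext q
      simp only [Set.mem_setOf_eq, Set.mem_union, Set.mem_compl_iff]
      exact imp_iff_not_or
    rw [this]
    exact hA.compl.union hB
  · have measEval : ∀ i : Fin d,
        Measurable fun x : Fin d → SignedMeasure Y => x i := fun i => by
      have hc : @Continuous _ _ tVM tSM (fun x : Fin d → SignedMeasure Y => x i) :=
        continuous_apply i
      exact @Continuous.measurable _ _ tVM mVM (@BorelSpace.opensMeasurable _ tVM mVM ⟨rfl⟩)
        tSM mSM ⟨rfl⟩ _ hc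
    have hset : {q : FiniteMeasure Y × (Fin d → SignedMeasure Y) |
        vmAC q.2 (q.1 : Measure Y)} =
        ⋂ i : Fin d, ⋂ n : ℕ, ⋃ m : ℕ, ⋂ t : Finset ℕ,
          {q : FiniteMeasure Y × (Fin d → SignedMeasure Y) |
            (q.1 : Measure Y) (W t) ≤ ((m : ℝ≥0∞) + 1)⁻¹ →
              |q.2 i (W t)| ≤ ((n : ℝ) + 1)⁻¹} := by
      ext q
      simp only [Set.mem_setOf_eq, Set.mem_iInter, Set.mem_iUnion, vmAC]
      exact forall_congr' fun i => key2 q.1 (q.2 i)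
    rw [hset]
    refine MeasurableSet.iInter fun i => MeasurableSet.iInter fun n =>
      MeasurableSet.iUnion fun m => MeasurableSet.iInter fun t => ?_
    have hA : MeasurableSet {q : FiniteMeasure Y × (Fin d → SignedMeasure Y) |
        (q.1 : Measure Y) (W t) ≤ ((m : ℝ≥0∞) + 1)⁻¹} :=
      measurableSet_le ((measFMopen _ (hWopen t)).comp measurable_fst) measurable_const
    have hB : MeasurableSet {q : FiniteMeasure Y × (Fin d → SignedMeasure Y) |
        |q.2 i (W t)| ≤ ((n : ℝ) + 1)⁻¹} := by
      have hmeas : Measurable fun q : FiniteMeasure Y × (Fin d → SignedMeasure Y) =>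
          |q.2 i (W t)| :=
        ((measSMopen _ (hWopen t)).comp ((measEval i).comp measurable_snd)).abs
      exact measurableSet_le hmeas measurable_const
    have : {q : FiniteMeasure Y × (Fin d → SignedMeasure Y) |
        (q.1 : Measure Y) (W t) ≤ ((m : ℝ≥0∞) + 1)⁻¹ →
          |q.2 i (W t)| ≤ ((n : ℝ) + 1)⁻¹} =
        {q : FiniteMeasure Y × (Fin d → SignedMeasure Y) |
          (q.1 : Measure Y) (W t) ≤ ((m : ℝ≥0∞) + 1)⁻¹}ᶜ ∪
        {q : FiniteMeasure Y × (Fin d → SignedMeasure Y) |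
          |q.2 i (W t)| ≤ ((n : ℝ) + 1)⁻¹} := by
      ext q
      simp only [Set.mem_setOf_eq, Set.mem_union, Set.mem_compl_iff]
      exact imp_iff_not_or
    rw [this]
    exact hA.compl.union hB

end
end
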